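/- arXiv:0710.4109 — 5 statements merged into one kernel-verified Lean document; each statement's English description precedes it below -/
import Mathlib

section
/- There is a constant c > 0 such that for every integer n ≥ 3 there exists a set S of n points in the plane ℝ² in strictly convex position (every point of S is an extreme point of the convex hull of S) such that the number of unordered triples of distinct points of S forming a triangle of area exactly 1 is at least c · n · log n. -/
open scoped Classical

/-- The plane `ℝ²`. -/
noncomputable abbrev Plane := EuclideanSpace ℝ (Fin 2)

/-- Area of the triangle with vertices `a b c` in the plane:
`(1/2)·|det(b − a, c − a)|`. -/
noncomputable def triArea2 (a b c : Plane) : ℝ :=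
  |(b 0 - a 0) * (c 1 - a 1) - (b 1 - a 1) * (c 0 - a 0)| / 2

/-- The number of unordered triples of distinct points of `S` that span a
triangle of area exactly `A`. -/
noncomputable def areaTripleCount2 (S : Finset Plane) (A : ℝ) : ℕ :=
  Set.ncard {T : Finset Plane | T ⊆ S ∧ T.card = 3 ∧
    ∃ a b c : Plane, T = {a, b, c} ∧ triArea2 a b c = A}

/-- A finite point set is in strictly convex position if every point of it is
an extreme point of its convex hull. -/
def StrictlyConvexPosition (S : Finset Plane) : Prop :=
  ∀ p ∈ S, p ∈ Set.extremePoints ℝ (convexHull ℝ (S : Set Plane))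

/-!
Put the points on the hyperbola `xy = 1`. Each of them is cut off from the others by the tangent
line there, so they are in strictly convex position, and the points over `0 < x < y < z` span a
triangle of area `(y - x)(z - y)(z - x) / (2xyz)`. This area is invariant under `x ↦ r x`, so if
`(1, q, Q)` spans a unit triangle and `q, Q` are generic enough that `X`, `qX`, `QX` are disjoint,
then `X ∪ qX ∪ QX` carries the unit triangles of the three copies of `X` together with the `|X|`
triangles `(x, qx, Qx)`. Iterating `L` times gives `3^L` points with `L·3^(L-1)` unit triangles;
taking `L = ⌊log₃ n⌋` and adding arbitrary further points gives `Ω(n log n)`.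
-/

open Finset
open scoped Pointwise

section Convexity
variable {𝕜 E : Type*} [Field 𝕜] [LinearOrder 𝕜] [IsStrictOrderedRing 𝕜] [AddCommGroup E]
  [Module 𝕜 E]

theorem convex_insert_setOf_lt (ℓ : E →ₗ[𝕜] 𝕜) (p : E) :
    Convex 𝕜 (insert p {y | ℓ p < ℓ y}) := by
  refine convex_iff_openSegment_subset.2 ?_
  rintro x hx y hy _ ⟨a, b, ha, hb, hab, rfl⟩
  simp only [Set.mem_insert_iff, Set.mem_ofPred_eq] at hx hy ⊢
  rcases hx with rfl | hx <;> rcases hy with rfl | hy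
  · left; rw [← add_smul, hab, one_smul]
  all_goals
    right
    obtain rfl : a = 1 - b := by linarith
    simp only [map_add, map_smul, smul_eq_mul]
  · nlinarith [mul_pos hb (sub_pos.2 hy)]
  · nlinarith [mul_pos ha (sub_pos.2 hx)]
  · nlinarith [mul_pos ha (sub_pos.2 hx), mul_pos hb (sub_pos.2 hy)]

theorem mem_extremePoints_convexHull_of_forall_lt {s : Set E} {p : E} (ℓ : E →ₗ[𝕜] 𝕜)
    (hp : p ∈ s) (h : ∀ y ∈ s, y ≠ p → ℓ p < ℓ y) : p ∈ (convexHull 𝕜 s).extremePoints 𝕜 := by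
  have hull : convexHull 𝕜 s ⊆ insert p {y | ℓ p < ℓ y} :=
    convexHull_min (fun y hy => or_iff_not_imp_left.2 (h y hy)) (convex_insert_setOf_lt ℓ p)
  have hsdiff : convexHull 𝕜 s \ {p} = convexHull 𝕜 s ∩ {y | ℓ p < ℓ y} := by
    ext y
    constructor
    · rintro ⟨hy, hyp⟩
      exact ⟨hy, (hull hy).resolve_left hyp⟩
    · rintro ⟨hy, hlt⟩
      exact ⟨hy, fun hyp => (Set.mem_singleton_iff.1 hyp ▸ hlt).false⟩
  rw [(convex_convexHull 𝕜 s).mem_extremePoints_iff_convex_sdiff, hsdiff]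
  exact ⟨subset_convexHull 𝕜 s hp,
    (convex_convexHull 𝕜 s).inter (convex_halfSpace_gt ℓ.isLinear _)⟩

end Convexity

theorem mk_eq_mk_of_triple_eq {α : Type*} [LinearOrder α] {a b c a' b' c' : α}
    (h : ({a, b, c} : Finset α) = {a', b', c'})
    (hab : a < b) (hbc : b < c) (hab' : a' < b') (hbc' : b' < c') : (a, b, c) = (a', b', c') := by
  have mem : ∀ x, x ∈ ({a, b, c} : Finset α) ↔ x ∈ ({a', b', c'} : Finset α) := by simp [h]
  simp only [mem_insert, mem_singleton] at mem
  have ha := (mem a).1 (by simp)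
  have hb := (mem b).1 (by simp)
  have hc := (mem c).1 (by simp)
  have ha' := (mem a').2 (by simp)
  have hc' := (mem c').2 (by simp)
  have e1 : a = a' := by rcases ha with h | h | h <;> rcases ha' with h' | h' | h' <;> order
  have e3 : c = c' := by rcases hc with h | h | h <;> rcases hc' with h' | h' | h' <;> order
  have e2 : b = b' := by rcases hb with h | h | h <;> order
  rw [e1, e2, e3]

theorem disjoint_smul_finset_of_div_notMem {α : Type*} [CommGroupWithZero α] [DecidableEq α]
    {A : Finset α} {r s : α} (hA : 0 ∉ A) (hr : r ≠ 0) (h : s / r ∉ A / A) :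
    Disjoint (r • A) (s • A) := by
  refine disjoint_left.2 fun _ hr' hs' => h ?_
  obtain ⟨x, hx, rfl⟩ := mem_smul_finset.1 hr'
  obtain ⟨y, hy, hxy⟩ := mem_smul_finset.1 hs'
  refine mem_div.2 ⟨x, hx, y, hy, ?_⟩
  have hy0 : y ≠ 0 := ne_of_mem_of_not_mem hy hA
  rw [smul_eq_mul, smul_eq_mul] at hxy
  rw [div_eq_div_iff hy0 hr, hxy, mul_comm]

theorem finite_setOf_quadratic_eq_zero {K : Type*} [Field K] {a b c : K}
    (h : a ≠ 0 ∨ b ≠ 0 ∨ c ≠ 0) : {x : K | a * x ^ 2 + b * x + c = 0}.Finite := by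
  open Polynomial in
  have hp : C a * X ^ 2 + C b * X + C c ≠ 0 := by
    intro hp
    rcases h with h | h | h <;> refine h ?_
    · simpa using congrArg (coeff · 2) hp
    · simpa using congrArg (coeff · 1) hp
    · simpa using congrArg (coeff · 0) hp
  convert Polynomial.finite_setOfPred_isRoot hp using 2
  simp

theorem exists_superset_card_eq_of_forall_pos {X : Finset ℝ} (hX : ∀ x ∈ X, 0 < x) {n : ℕ}
    (hn : #X ≤ n) : ∃ Y, X ⊆ Y ∧ (∀ y ∈ Y, 0 < y) ∧ #Y = n := by
  set P := (range n).image fun k : ℕ => (k : ℝ) + 1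
  have hP : #P = n := by
    rw [card_image_of_injective _ fun k l h => by simpa using h, card_range]
  obtain ⟨Y, hXY, hY, rfl⟩ :=
    exists_subsuperset_card_eq subset_union_left hn (hP ▸ card_le_card subset_union_right)
  refine ⟨Y, hXY, fun y hy => ?_, rfl⟩
  rcases mem_union.1 (hY hy) with hy | hy
  · exact hX y hy
  · obtain ⟨k, -, rfl⟩ := mem_image.1 hy
    positivity

theorem natCast_mul_log_le {b n : ℕ} (hb : 1 < b) (hn : b ≤ n) :
    (n : ℝ) * Real.log n ≤ 2 * b * Real.log b * (Nat.log b n * b ^ Nat.log b n) := by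
  set L := Nat.log b n
  have hL : (1 : ℝ) ≤ L := by exact_mod_cast Nat.log_pos hb hn
  have hnL : (n : ℝ) ≤ b ^ (L + 1) := by exact_mod_cast (Nat.lt_pow_succ_log_self hb n).le
  have hn1 : (1 : ℝ) ≤ n := by exact_mod_cast hb.le.trans hn
  have hlogb : 0 ≤ Real.log b := Real.log_nonneg (by exact_mod_cast hb.le)
  have hlogn : Real.log n ≤ (L + 1) * Real.log b := by
    have := Real.log_le_log (by positivity) hnL
    rwa [Real.log_pow, Nat.cast_succ] at this
  calc (n : ℝ) * Real.log n ≤ b ^ (L + 1) * ((L + 1) * Real.log b) :=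
        mul_le_mul hnL hlogn (Real.log_nonneg hn1) (by positivity)
    _ ≤ b ^ (L + 1) * ((2 * L) * Real.log b) := by gcongr; linarith
    _ = 2 * b * Real.log b * (L * b ^ L) := by ring

noncomputable def hyperbolaPt (x : ℝ) : Plane := !₂[x, x⁻¹]

theorem hyperbolaPt_injective : Function.Injective hyperbolaPt := fun x y h => by
  simpa [hyperbolaPt] using congrArg (· 0) h

theorem triArea2_hyperbolaPt {x y z : ℝ} (hx : x ≠ 0) (hy : y ≠ 0) (hz : z ≠ 0) :
    triArea2 (hyperbolaPt x) (hyperbolaPt y) (hyperbolaPt z) =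
      |(y - x) * (z - y) * (z - x) / (x * y * z)| / 2 := by
  simp only [triArea2, hyperbolaPt, PiLp.toLp_apply, Matrix.cons_val_zero, Matrix.cons_val_one,
    Matrix.cons_val_fin_one]
  congr 2
  field_simp
  ring

theorem strictlyConvexPosition_image_hyperbolaPt {Y : Finset ℝ} (hY : ∀ y ∈ Y, 0 < y) :
    StrictlyConvexPosition (Y.image hyperbolaPt) := by
  intro p hp
  obtain ⟨a, ha, rfl⟩ := mem_image.1 hp
  -- the tangent line to the hyperbola at `(a, 1/a)` supports it there
  refine mem_extremePoints_convexHull_of_forall_lt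
    (EuclideanSpace.projₗ 0 + a ^ 2 • EuclideanSpace.projₗ 1) hp ?_
  simp only [coe_image, Set.mem_image, mem_coe]
  rintro _ ⟨b, hb, rfl⟩ hba
  have hab : b ≠ a := fun h => hba (h ▸ rfl)
  have ha0 := hY a ha
  have hb0 := hY b hb
  simp only [hyperbolaPt, LinearMap.add_apply, LinearMap.smul_apply, PiLp.projₗ_apply,
    Matrix.cons_val_zero, Matrix.cons_val_one, Matrix.cons_val_fin_one, smul_eq_mul]
  have key : b + a ^ 2 * b⁻¹ - (a + a ^ 2 * a⁻¹) = (b - a) ^ 2 / b := by field_simp; ring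
  linarith [div_pos (sq_pos_of_ne_zero (sub_ne_zero.2 hab)) hb0]

-- `x < y < z`, and the points of the hyperbola over `x, y, z` span a triangle of area `1`
def IsUnitAreaTriple (x y z : ℝ) : Prop :=
  x < y ∧ y < z ∧ (y - x) * (z - y) * (z - x) = 2 * (x * y * z)

theorem IsUnitAreaTriple.triArea2_eq_one {x y z : ℝ} (h : IsUnitAreaTriple x y z) (hx : 0 < x) :
    triArea2 (hyperbolaPt x) (hyperbolaPt y) (hyperbolaPt z) = 1 := by
  obtain ⟨hxy, hyz, hxyz⟩ := h
  have hy := hx.trans hxy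
  have hz := hy.trans hyz
  rw [triArea2_hyperbolaPt hx.ne' hy.ne' hz.ne', hxyz, mul_div_assoc,
    div_self (by positivity : x * y * z ≠ 0)]
  norm_num

theorem IsUnitAreaTriple.mul_left {x y z r : ℝ} (h : IsUnitAreaTriple x y z) (hr : 0 < r) :
    IsUnitAreaTriple (r * x) (r * y) (r * z) := by
  obtain ⟨hxy, hyz, hxyz⟩ := h
  exact ⟨by gcongr, by gcongr, by linear_combination r ^ 3 * hxyz⟩

noncomputable def unitAreaTriples (A B C : Finset ℝ) : Finset (ℝ × ℝ × ℝ) :=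
  (A ×ˢ B ×ˢ C).filter fun t => IsUnitAreaTriple t.1 t.2.1 t.2.2

theorem mem_unitAreaTriples {A B C : Finset ℝ} {x y z : ℝ} :
    (x, y, z) ∈ unitAreaTriples A B C ↔ (x ∈ A ∧ y ∈ B ∧ z ∈ C) ∧ IsUnitAreaTriple x y z := by
  simp [unitAreaTriples]

theorem unitAreaTriples_mono {A B C A' B' C' : Finset ℝ} (hA : A ⊆ A') (hB : B ⊆ B')
    (hC : C ⊆ C') : unitAreaTriples A B C ⊆ unitAreaTriples A' B' C' :=
  filter_subset_filter _ (product_subset_product hA (product_subset_product hB hC))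

theorem disjoint_unitAreaTriples {A B C A' B' C' : Finset ℝ}
    (h : Disjoint A A' ∨ Disjoint B B') :
    Disjoint (unitAreaTriples A B C) (unitAreaTriples A' B' C') :=
  disjoint_filter_filter <| disjoint_product.2 <|
    h.imp_right fun hB => disjoint_product.2 (Or.inl hB)

theorem card_unitAreaTriples_le_smul {A B C : Finset ℝ} {r : ℝ} (hr : 0 < r) :
    #(unitAreaTriples A B C) ≤ #(unitAreaTriples (r • A) (r • B) (r • C)) := by
  refine card_le_card_of_injOn (fun t => (r * t.1, r * t.2.1, r * t.2.2)) ?_ ?_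
  · rintro ⟨x, y, z⟩ ht
    obtain ⟨⟨hx, hy, hz⟩, hxyz⟩ := mem_unitAreaTriples.1 ht
    exact mem_unitAreaTriples.2 ⟨⟨smul_mem_smul_finset hx, smul_mem_smul_finset hy,
      smul_mem_smul_finset hz⟩, hxyz.mul_left hr⟩
  · rintro ⟨x, y, z⟩ - ⟨x', y', z'⟩ - h
    simp only [Prod.mk.injEq, mul_right_inj' hr.ne'] at h ⊢
    exact h

theorem card_le_card_unitAreaTriples_smul_smul {A : Finset ℝ} {q Q : ℝ} (hA : ∀ x ∈ A, 0 < x)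
    (hqQ : IsUnitAreaTriple 1 q Q) : #A ≤ #(unitAreaTriples A (q • A) (Q • A)) := by
  refine card_le_card_of_injOn (fun x => (x, q * x, Q * x)) (fun x hx => ?_) ?_
  · have := hqQ.mul_left (hA x hx)
    rw [mul_one, mul_comm x, mul_comm x] at this
    exact mem_unitAreaTriples.2 ⟨⟨hx, smul_mem_smul_finset hx, smul_mem_smul_finset hx⟩, this⟩
  · exact fun x _ y _ h => (Prod.mk.inj h).1

theorem three_mul_card_unitAreaTriples_add_card_le {A : Finset ℝ} {q Q : ℝ}
    (hA : ∀ x ∈ A, 0 < x) (hqQ : IsUnitAreaTriple 1 q Q) (hAq : Disjoint A (q • A))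
    (hAQ : Disjoint A (Q • A)) (hqQA : Disjoint (q • A) (Q • A)) :
    3 * #(unitAreaTriples A A A) + #A ≤
      #(unitAreaTriples (A ∪ q • A ∪ Q • A) (A ∪ q • A ∪ Q • A) (A ∪ q • A ∪ Q • A)) := by
  have hq : 0 < q := one_pos.trans hqQ.1
  have hQ : 0 < Q := hq.trans hqQ.2.1
  set B := A ∪ q • A ∪ Q • A
  have hAB : A ⊆ B := subset_union_left.trans subset_union_left
  have hqB : q • A ⊆ B := subset_union_right.trans subset_union_left
  have hQB : Q • A ⊆ B := subset_union_right
  calc 3 * #(unitAreaTriples A A A) + #A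
      ≤ #(unitAreaTriples A A A) + #(unitAreaTriples (q • A) (q • A) (q • A)) +
          #(unitAreaTriples (Q • A) (Q • A) (Q • A)) + #(unitAreaTriples A (q • A) (Q • A)) := by
        have := card_unitAreaTriples_le_smul (A := A) (B := A) (C := A) hq
        have := card_unitAreaTriples_le_smul (A := A) (B := A) (C := A) hQ
        have := card_le_card_unitAreaTriples_smul_smul hA hqQ
        omega
    _ = #(unitAreaTriples A A A ∪ unitAreaTriples (q • A) (q • A) (q • A) ∪
          unitAreaTriples (Q • A) (Q • A) (Q • A) ∪ unitAreaTriples A (q • A) (Q • A)) := by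
        rw [card_union_of_disjoint, card_union_of_disjoint, card_union_of_disjoint]
        · exact disjoint_unitAreaTriples (Or.inl hAq)
        · exact disjoint_union_left.2 ⟨disjoint_unitAreaTriples (Or.inl hAQ),
            disjoint_unitAreaTriples (Or.inl hqQA)⟩
        · exact disjoint_union_left.2 ⟨disjoint_union_left.2
            ⟨disjoint_unitAreaTriples (Or.inr hAq), disjoint_unitAreaTriples (Or.inl hAq.symm)⟩,
            disjoint_unitAreaTriples (Or.inl hAQ.symm)⟩
    _ ≤ #(unitAreaTriples B B B) := card_le_card <| union_subset (union_subset (union_subset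
          (unitAreaTriples_mono hAB hAB hAB) (unitAreaTriples_mono hqB hqB hqB))
          (unitAreaTriples_mono hQB hQB hQB)) (unitAreaTriples_mono hAB hqB hQB)

theorem card_unitAreaTriples_le_areaTripleCount2 {Y : Finset ℝ} (hY : ∀ y ∈ Y, 0 < y) :
    #(unitAreaTriples Y Y Y) ≤ areaTripleCount2 (Y.image hyperbolaPt) 1 := by
  rw [← Set.ncard_coe_finset, areaTripleCount2]
  refine Set.ncard_le_ncard_of_injOn
    (fun t => {hyperbolaPt t.1, hyperbolaPt t.2.1, hyperbolaPt t.2.2}) ?_ ?_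
    ((Y.image hyperbolaPt).powerset.finite_toSet.subset fun T hT => mem_powerset.2 hT.1)
  · rintro ⟨x, y, z⟩ ht
    obtain ⟨⟨hx, hy, hz⟩, hxyz⟩ := mem_unitAreaTriples.1 ht
    refine ⟨?_, card_eq_three.2 ⟨_, _, _, ?_, ?_, ?_, rfl⟩, _, _, _, rfl,
      hxyz.triArea2_eq_one (hY x hx)⟩
    · simp only [insert_subset_iff, singleton_subset_iff]
      exact ⟨mem_image_of_mem _ hx, mem_image_of_mem _ hy, mem_image_of_mem _ hz⟩
    all_goals
      refine hyperbolaPt_injective.ne (ne_of_lt ?_)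
      linarith [hxyz.1, hxyz.2.1]
  · rintro ⟨x, y, z⟩ ht ⟨x', y', z'⟩ ht' h
    obtain ⟨-, hxy, hyz, -⟩ := mem_unitAreaTriples.1 ht
    obtain ⟨-, hxy', hyz', -⟩ := mem_unitAreaTriples.1 ht'
    refine mk_eq_mk_of_triple_eq (image_injective hyperbolaPt_injective ?_) hxy hyz hxy' hyz'
    simpa [image_insert] using h

theorem exists_isUnitAreaTriple_one {q : ℝ} (hq : 1 < q) : ∃ Q, IsUnitAreaTriple 1 q Q := by
  -- `Q` is the larger root of `(q - 1) Q² - (q² + 2q - 1) Q + (q² - q)`, which is negative at `q`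
  set a := q - 1
  set b := q ^ 2 + 2 * q - 1
  set D := b ^ 2 - 4 * a * (q ^ 2 - q)
  have ha : 0 < a := sub_pos.2 hq
  have hD : (2 * a * q - b) ^ 2 < D := by nlinarith [mul_pos ha (by positivity : 0 < q ^ 2)]
  have hsq : √D ^ 2 = D := Real.sq_sqrt ((sq_nonneg _).trans hD.le)
  have hlt : 2 * a * q - b < √D := Real.lt_sqrt_of_sq_lt hD
  refine ⟨(b + √D) / (2 * a), hq, by rw [lt_div_iff₀ (by positivity)]; linarith, ?_⟩
  field_simp
  linear_combination a * hsq

theorem exists_isUnitAreaTriple_one_notMem (R : Finset ℝ) :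
    ∃ q Q, IsUnitAreaTriple 1 q Q ∧ q ∉ R ∧ Q ∉ R ∧ Q / q ∉ R := by
  -- `Q = C` and `Q = C * q` each make `q` a root of a nonzero quadratic
  set bad : Set ℝ := ⋃ C ∈ R, ({C} ∪
    {q | (1 - C) * q ^ 2 + (C ^ 2 - 2 * C - 1) * q + (C - C ^ 2) = 0} ∪
    {q | (C ^ 2 - C) * q ^ 2 + (1 - 2 * C - C ^ 2) * q + (C - 1) = 0})
  have hbad : bad.Finite := by
    refine R.finite_toSet.biUnion fun C _ => ((Set.finite_singleton C).union ?_).union ?_ <;>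
      refine finite_setOf_quadratic_eq_zero ?_ <;>
      by_cases hC : C = 1
    · exact Or.inr (Or.inl (by norm_num [hC]))
    · exact Or.inl (by contrapose! hC; linarith)
    · exact Or.inr (Or.inl (by norm_num [hC]))
    · exact Or.inr (Or.inr (by contrapose! hC; linarith))
  obtain ⟨q, hq1 : 1 < q, hq⟩ := ((Set.Ioi_infinite 1).sdiff hbad).nonempty
  obtain ⟨Q, hQ⟩ := exists_isUnitAreaTriple_one hq1
  have hq0 : q ≠ 0 := by positivity
  refine ⟨q, Q, hQ, fun hR => hq ?_, fun hR => hq ?_, fun hR => hq ?_⟩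
  · exact Set.mem_biUnion hR (Or.inl (Or.inl rfl))
  · refine Set.mem_biUnion hR (Or.inl (Or.inr ?_))
    simp only [Set.mem_ofPred_eq]
    linear_combination hQ.2.2
  · refine Set.mem_biUnion hR (Or.inr ?_)
    simp only [Set.mem_ofPred_eq]
    field_simp
    linear_combination hQ.2.2

theorem exists_card_eq_three_pow_le_card_unitAreaTriples (L : ℕ) :
    ∃ X : Finset ℝ, (∀ x ∈ X, 0 < x) ∧ #X = 3 ^ L ∧ L * 3 ^ L ≤ 3 * #(unitAreaTriples X X X) := by
  induction L with
  | zero => exact ⟨{1}, by simp, by simp, by simp⟩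
  | succ L ih =>
    obtain ⟨X, hX, hcard, hcount⟩ := ih
    obtain ⟨q, Q, hqQ, hq, hQ, hQq⟩ := exists_isUnitAreaTriple_one_notMem (X / X)
    have hq0 : 0 < q := one_pos.trans hqQ.1
    have hQ0 : 0 < Q := hq0.trans hqQ.2.1
    have hX0 : (0 : ℝ) ∉ X := fun h => (hX 0 h).false
    have hXq : Disjoint X (q • X) := by
      simpa using disjoint_smul_finset_of_div_notMem (r := 1) hX0 one_ne_zero (by simpa using hq)
    have hXQ : Disjoint X (Q • X) := by
      simpa using disjoint_smul_finset_of_div_notMem (r := 1) hX0 one_ne_zero (by simpa using hQ)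
    have hqQX : Disjoint (q • X) (Q • X) := disjoint_smul_finset_of_div_notMem hX0 hq0.ne' hQq
    refine ⟨X ∪ q • X ∪ Q • X, ?_, ?_, ?_⟩
    · simp only [mem_union, mem_smul_finset, smul_eq_mul]
      rintro _ ((hx | ⟨x, hx, rfl⟩) | ⟨x, hx, rfl⟩)
      exacts [hX _ hx, mul_pos hq0 (hX x hx), mul_pos hQ0 (hX x hx)]
    · rw [card_union_of_disjoint (disjoint_union_left.2 ⟨hXQ, hqQX⟩),
        card_union_of_disjoint hXq, card_smul_finset₀ hq0.ne', card_smul_finset₀ hQ0.ne', hcard]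
      ring
    · have := three_mul_card_unitAreaTriples_add_card_le hX hqQ hXq hXQ hqQX
      rw [hcard] at this
      calc (L + 1) * 3 ^ (L + 1) = 3 * (L * 3 ^ L) + 3 * 3 ^ L := by ring
        _ ≤ 3 * (3 * #(unitAreaTriples X X X)) + 3 * 3 ^ L := by gcongr
        _ ≤ _ := by linarith

/-- For every `n ≥ 3` there are `n` points in strictly convex position in the
plane spanning `Ω(n log n)` unit-area triangles. -/
theorem convex_position_unit_area_lower_bound :
    ∃ c : ℝ, 0 < c ∧ ∀ n : ℕ, 3 ≤ n →
      ∃ S : Finset Plane, S.card = n ∧ StrictlyConvexPosition S ∧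
        c * (n : ℝ) * Real.log n ≤ (areaTripleCount2 S 1 : ℝ) := by
  have hlog3 : 0 < Real.log 3 := Real.log_pos (by norm_num)
  refine ⟨1 / (18 * Real.log 3), by positivity, fun n hn => ?_⟩
  set L := Nat.log 3 n
  obtain ⟨X, hX, hXcard, hXcount⟩ := exists_card_eq_three_pow_le_card_unitAreaTriples L
  obtain ⟨Y, hXY, hY, hYcard⟩ := exists_superset_card_eq_of_forall_pos hX
    (hXcard ▸ Nat.pow_log_le_self 3 (by omega) : #X ≤ n)
  refine ⟨Y.image hyperbolaPt, by rw [card_image_of_injective _ hyperbolaPt_injective, hYcard],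
    strictlyConvexPosition_image_hyperbolaPt hY, ?_⟩
  have hcount : (L * 3 ^ L : ℝ) ≤ 3 * areaTripleCount2 (Y.image hyperbolaPt) 1 := by
    exact_mod_cast hXcount.trans <| Nat.mul_le_mul_left 3 <|
      (card_le_card (unitAreaTriples_mono hXY hXY hXY)).trans
        (card_unitAreaTriples_le_areaTripleCount2 hY)
  calc 1 / (18 * Real.log 3) * n * Real.log n = n * Real.log n / (18 * Real.log 3) := by ring
    _ ≤ 2 * 3 * Real.log 3 * (L * 3 ^ L) / (18 * Real.log 3) :=
        (div_le_div_iff_of_pos_right (by positivity)).2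
          (by exact_mod_cast natCast_mul_log_le (b := 3) (by norm_num) hn)
    _ = L * 3 ^ L / 3 := by field_simp; ring
    _ ≤ areaTripleCount2 (Y.image hyperbolaPt) 1 := by linarith
end

section
/- Let S be a set of n points in the plane ℝ² that spans at least one nondegenerate triangle, and let A > 0 be the minimum area over all nondegenerate triangles spanned by S. Then the number of unordered triples of distinct points of S forming a triangle of area exactly A is at most n² − n. -/
open scoped Classical

/-- The set of areas of nondegenerate triangles spanned by `S`. -/
def posAreaSet2 (S : Finset Plane) : Set ℝ :=
  {x : ℝ | ∃ a ∈ S, ∃ b ∈ S, ∃ c ∈ S, 0 < triArea2 a b c ∧ triArea2 a b c = x}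

/-!
Orient every minimum-area triangle so that its first two vertices `p, q` span a longest side and
it is counterclockwise. This maps the triangles to ordered pairs of distinct points, injectively:
two apexes `r, r'` over the same base lie on the line parallel to `pq` at height `2A / |pq|`,
inside the lens `|xp|, |xq| ≤ |pq|`. That chord of the lens is shorter than `|pq|`, so the
triangle `p r r'` has area less than `A`; it is therefore degenerate, which forces `r = r'`.
-/

open scoped RealInnerProductSpace
open Finset

theorem abs_sub_lt_of_sq_add_sq_le {x y h L : ℝ} (hh : 0 < h) (hL : 0 < L)
    (hx : x ^ 2 + h ^ 2 ≤ L ^ 2) (hx' : (x - L) ^ 2 + h ^ 2 ≤ L ^ 2)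
    (hy : y ^ 2 + h ^ 2 ≤ L ^ 2) (hy' : (y - L) ^ 2 + h ^ 2 ≤ L ^ 2) : |x - y| < L := by
  rw [abs_sub_lt_iff]
  constructor
  · nlinarith [sq_nonneg (x + y - L), mul_pos hh hL]
  · nlinarith [sq_nonneg (x + y - L), mul_pos hh hL]

namespace Orientation

variable {E : Type*} [NormedAddCommGroup E] [InnerProductSpace ℝ E] [Fact (Module.finrank ℝ E = 2)]
  (o : Orientation ℝ E (Fin 2))

local notation "ω" => o.areaForm

theorem areaForm_sub_sub_swap (a b c : E) : ω (a - b) (c - b) = -ω (b - a) (c - a) := by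
  simp only [map_sub, LinearMap.sub_apply, areaForm_apply_self]
  linear_combination -o.areaForm_swap a b

theorem areaForm_sub_sub_rotate (a b c : E) : ω (c - b) (a - b) = ω (b - a) (c - a) := by
  simp only [map_sub, LinearMap.sub_apply, areaForm_apply_self]
  linear_combination o.areaForm_swap c a - o.areaForm_swap c b

theorem inner_sq_add_areaForm_sq_le {u v : E} (hv : ‖v‖ ≤ ‖u‖) :
    ⟪u, v⟫ ^ 2 + ω u v ^ 2 ≤ (‖u‖ ^ 2) ^ 2 := by
  rw [o.inner_sq_add_areaForm_sq, sq (‖u‖ ^ 2)]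
  gcongr

theorem abs_areaForm_lt_of_mem_lens {u v w : E} {h : ℝ} (hh : 0 < h)
    (hv : ω u v = h) (hw : ω u w = h) (hv₁ : ‖v‖ ≤ ‖u‖) (hv₂ : ‖v - u‖ ≤ ‖u‖)
    (hw₁ : ‖w‖ ≤ ‖u‖) (hw₂ : ‖w - u‖ ≤ ‖u‖) : |ω v w| < h := by
  have hu : 0 < ‖u‖ ^ 2 := by
    have : u ≠ 0 := by
      rintro rfl
      simp only [map_zero, LinearMap.zero_apply] at hv
      linarith
    positivity
  have bounds : ∀ z : E, ω u z = h → ‖z‖ ≤ ‖u‖ → ‖z - u‖ ≤ ‖u‖ →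
      ⟪u, z⟫ ^ 2 + h ^ 2 ≤ (‖u‖ ^ 2) ^ 2 ∧ (⟪u, z⟫ - ‖u‖ ^ 2) ^ 2 + h ^ 2 ≤ (‖u‖ ^ 2) ^ 2 := by
    intro z hz hz₁ hz₂
    have h₂ := o.inner_sq_add_areaForm_sq_le hz₂
    rw [inner_sub_right, real_inner_self_eq_norm_sq, map_sub, o.areaForm_apply_self, sub_zero,
      hz] at h₂
    exact ⟨hz ▸ o.inner_sq_add_areaForm_sq_le hz₁, h₂⟩
  obtain ⟨hv', hv''⟩ := bounds v hv hv₁ hv₂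
  obtain ⟨hw', hw''⟩ := bounds w hw hw₁ hw₂
  have hproj := abs_sub_lt_of_sq_add_sq_le hh hu hv' hv'' hw' hw''
  have hid : ‖u‖ ^ 2 * ω v w = (⟪u, v⟫ - ⟪u, w⟫) * h := by
    rw [← o.inner_mul_areaForm_sub, hv, hw]; ring
  have : ‖u‖ ^ 2 * |ω v w| < ‖u‖ ^ 2 * h := by
    rw [← abs_of_pos hu, ← abs_mul, hid, abs_mul, abs_of_pos hh, abs_of_pos hu]
    exact mul_lt_mul_of_pos_right hproj hh
  exact lt_of_mul_lt_mul_left this hu.le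

theorem eq_of_areaForm_eq_zero {u v w : E} (hvw : ω v w = 0) (huv : ω u v = ω u w)
    (hu : ω u v ≠ 0) : v = w := by
  have hinner : ⟪u, v - w⟫ = 0 := by
    have hid : ω u v * ⟪u, v - w⟫ = 0 := by
      rw [inner_sub_right]
      linear_combination o.inner_mul_areaForm_sub u v w + huv * ⟪u, v⟫ + ‖u‖ ^ 2 * hvw
    exact (mul_eq_zero.mp hid).resolve_left hu
  have harea : ω u (v - w) = 0 := by rw [map_sub, huv, sub_self]
  have hnorm := o.inner_sq_add_areaForm_sq u (v - w)
  rw [hinner, harea] at hnorm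
  have hu0 : u ≠ 0 := by rintro rfl; simp at hu
  have : ‖v - w‖ ^ 2 = 0 := by
    simpa [hu0] using hnorm.symm
  simpa [sub_eq_zero] using this

theorem eq_of_areaForm_eq_of_dist_le {p q r r' : E} {h : ℝ} (hh : 0 < h)
    (hr : ω (q - p) (r - p) = h) (hr' : ω (q - p) (r' - p) = h)
    (hpr : dist p r ≤ dist p q) (hqr : dist q r ≤ dist p q)
    (hpr' : dist p r' ≤ dist p q) (hqr' : dist q r' ≤ dist p q)
    (hmin : ω (r - p) (r' - p) ≠ 0 → h ≤ |ω (r - p) (r' - p)|) : r = r' := by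
  have norm_le : ∀ s, dist p s ≤ dist p q → dist q s ≤ dist p q →
      ‖s - p‖ ≤ ‖q - p‖ ∧ ‖s - p - (q - p)‖ ≤ ‖q - p‖ := by
    intro s hps hqs
    rw [sub_sub_sub_cancel_right, ← dist_eq_norm, ← dist_eq_norm, ← dist_eq_norm, dist_comm s,
      dist_comm s, dist_comm q]
    exact ⟨hps, hqs⟩
  by_cases h0 : ω (r - p) (r' - p) = 0
  · simpa using o.eq_of_areaForm_eq_zero h0 (hr.trans hr'.symm) (hr ▸ hh.ne')
  · have hlt := o.abs_areaForm_lt_of_mem_lens hh hr hr' (norm_le r hpr hqr).1 (norm_le r hpr hqr).2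
      (norm_le r' hpr' hqr').1 (norm_le r' hpr' hqr').2
    exact absurd (hmin h0) hlt.not_ge

variable [DecidableEq E]

theorem exists_dist_le_abs_areaForm_eq (a b c : E) :
    ∃ p q r : E, ({p, q, r} : Finset E) = {a, b, c} ∧ dist p r ≤ dist p q ∧
      dist q r ≤ dist p q ∧ |ω (q - p) (r - p)| = |ω (b - a) (c - a)| := by
  have hbca : ({b, c, a} : Finset E) = {a, b, c} := by
    ext; simp only [mem_insert, mem_singleton]; tauto
  have hcab : ({c, a, b} : Finset E) = {a, b, c} := by
    ext; simp only [mem_insert, mem_singleton]; tauto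
  rcases le_total (dist a c) (dist a b) with hcb | hbc
  · rcases le_total (dist b c) (dist a b) with hca | hac
    · exact ⟨a, b, c, rfl, hcb, hca, rfl⟩
    · exact ⟨b, c, a, hbca, by linarith [dist_comm a b], by linarith [dist_comm a c],
        by rw [o.areaForm_sub_sub_rotate]⟩
  · rcases le_total (dist b c) (dist a c) with hba | hab
    · exact ⟨c, a, b, hcab, by linarith [dist_comm a c, dist_comm b c],
        by linarith [dist_comm a c], by rw [o.areaForm_sub_sub_rotate, o.areaForm_sub_sub_rotate]⟩
    · exact ⟨b, c, a, hbca, by linarith [dist_comm a b], by linarith [dist_comm a c],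
        by rw [o.areaForm_sub_sub_rotate]⟩

theorem exists_dist_le_areaForm_eq_abs (a b c : E) :
    ∃ p q r : E, ({p, q, r} : Finset E) = {a, b, c} ∧ dist p r ≤ dist p q ∧
      dist q r ≤ dist p q ∧ ω (q - p) (r - p) = |ω (b - a) (c - a)| := by
  obtain ⟨p, q, r, hpqr, hpr, hqr, habs⟩ := o.exists_dist_le_abs_areaForm_eq a b c
  rcases le_total 0 (ω (q - p) (r - p)) with hpos | hneg
  · exact ⟨p, q, r, hpqr, hpr, hqr, by rw [← habs, abs_of_nonneg hpos]⟩
  · refine ⟨q, p, r, ?_, by rwa [dist_comm q p], by rwa [dist_comm q p], ?_⟩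
    · rw [← hpqr]; ext; simp only [mem_insert, mem_singleton]; tauto
    · rw [o.areaForm_sub_sub_swap, ← habs, abs_of_nonpos hneg]

theorem card_le_card_offDiag_of_min_areaForm {S : Finset E} {F : Finset (Finset E)} {h : ℝ}
    (hh : 0 < h)
    (hF : ∀ T ∈ F, T ⊆ S ∧ ∃ a b c, T = {a, b, c} ∧ |ω (b - a) (c - a)| = h)
    (hmin : ∀ a ∈ S, ∀ b ∈ S, ∀ c ∈ S, ω (b - a) (c - a) ≠ 0 → h ≤ |ω (b - a) (c - a)|) :
    #F ≤ #S.offDiag := by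
  refine card_le_card_of_forall_subsingleton (fun T (pq : E × E) => ∃ r, T = {pq.1, pq.2, r} ∧
    dist pq.1 r ≤ dist pq.1 pq.2 ∧ dist pq.2 r ≤ dist pq.1 pq.2 ∧ ω (pq.2 - pq.1) (r - pq.1) = h)
    ?_ ?_
  · intro T hT
    obtain ⟨hTS, a, b, c, rfl, habc⟩ := hF T hT
    obtain ⟨p, q, r, hpqr, hpr, hqr, hω⟩ := o.exists_dist_le_areaForm_eq_abs a b c
    rw [← hpqr] at hTS
    have hpq : p ≠ q := by
      rintro rfl
      simp only [sub_self, map_zero, LinearMap.zero_apply] at hω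
      linarith
    exact ⟨(p, q), mem_offDiag.2 ⟨hTS (by simp), hTS (by simp), hpq⟩, r, hpqr.symm, hpr, hqr,
      hω.trans habc⟩
  · rintro ⟨p, q⟩ hpq T₁ ⟨hT₁, r₁, rfl, hpr₁, hqr₁, hω₁⟩ T₂ ⟨hT₂, r₂, rfl, hpr₂, hqr₂, hω₂⟩
    have hr₁ : r₁ ∈ S := (hF _ hT₁).1 (by simp)
    have hr₂ : r₂ ∈ S := (hF _ hT₂).1 (by simp)
    rw [o.eq_of_areaForm_eq_of_dist_le hh hω₁ hω₂ hpr₁ hqr₁ hpr₂ hqr₂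
      (hmin p (mem_offDiag.1 hpq).1 r₁ hr₁ r₂ hr₂)]

end Orientation

instance : Fact (Module.finrank ℝ Plane = 2) := ⟨finrank_euclideanSpace_fin⟩

theorem triArea2_eq_abs_areaForm (o : Orientation ℝ Plane (Fin 2)) (a b c : Plane) :
    triArea2 a b c = |o.areaForm (b - a) (c - a)| / 2 := by
  rw [o.areaForm_to_volumeForm, o.volumeForm_robust' (EuclideanSpace.basisFun (Fin 2) ℝ),
    Module.Basis.det_apply, Matrix.det_fin_two, triArea2]
  congr 2
  simp only [Module.Basis.toMatrix_apply, OrthonormalBasis.coe_toBasis_repr_apply,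
    EuclideanSpace.basisFun_repr, Matrix.cons_val_zero, Matrix.cons_val_one, PiLp.sub_apply]
  ring

theorem areaTripleCount2_eq_card (S : Finset Plane) (A : ℝ) :
    areaTripleCount2 S A =
      #{T ∈ S.powerset | T.card = 3 ∧ ∃ a b c, T = {a, b, c} ∧ triArea2 a b c = A} := by
  rw [areaTripleCount2, ← Set.ncard_coe_finset]
  congr
  ext T
  simp

theorem min_area_triangles_plane_general (n : ℕ) (S : Finset Plane) (hS : S.card = n)
    (A : ℝ) (hA : IsLeast (posAreaSet2 S) A) :
    areaTripleCount2 S A ≤ n ^ 2 - n := by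
  have hApos : 0 < A := by
    obtain ⟨a, -, b, -, c, -, hpos, hA_eq⟩ := hA.1
    exact hA_eq ▸ hpos
  set o := (EuclideanSpace.basisFun (Fin 2) ℝ).toBasis.orientation
  rw [areaTripleCount2_eq_card, ← hS, sq, ← offDiag_card]
  refine o.card_le_card_offDiag_of_min_areaForm (h := 2 * A) (by linarith) ?_ ?_
  · intro T hT
    obtain ⟨hTS, -, a, b, c, hT, habc⟩ := by simpa using hT
    rw [triArea2_eq_abs_areaForm o] at habc
    exact ⟨hTS, a, b, c, hT, by linarith⟩
  · intro a ha b hb c hc hne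
    have hle := hA.2 ⟨a, ha, b, hb, c, hc, by rw [triArea2_eq_abs_areaForm o]; positivity, rfl⟩
    rw [triArea2_eq_abs_areaForm o] at hle
    linarith

/-- `n` points in the plane span at most `n² − n` triangles of minimum
(nonzero) area. -/
theorem min_area_triangles_plane (n : ℕ) (S : Finset Plane) (hS : S.card = n)
    (A : ℝ) (hApos : 0 < A) (hA : IsLeast (posAreaSet2 S) A) :
    areaTripleCount2 S A ≤ n ^ 2 - n :=
  min_area_triangles_plane_general n S hS A hA
end

section
/- Let S be a set of n points in the plane ℝ² that spans at least one nondegenerate triangle, and let A > 0 be the minimum area over all nondegenerate triangles spanned by S. Then the number of unordered triples of distinct points of S forming a triangle of area exactly A is at most (2/3)·(n² − n). -/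
/-!
Count ordered triples `(p, q, r)` of doubled signed area `2A`: each minimum-area triangle yields
three of them (its cyclic orders of positive orientation), so it suffices to find at most
`2 (n² - n)`. Group the triples by the direction of `pq` and make that direction horizontal by an
area-preserving linear map. If a row (horizontal line) `y = t` holds `m ≥ 2` points, minimality
forces `pq` to realise the smallest gap `d` of the row and puts `r` on the row `t ± 2A / d`;
for each sign at most `m - 1` ordered pairs of the row have gap `±d`. Distinct rows are sent to
distinct rows, since otherwise a smaller triangle would appear, so `2 (a - 1) b ≤ a (a - 1) +
b (b - 1)` bounds the count of each sign by the number of horizontal pairs.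
-/

open scoped Classical

open Finset

noncomputable section

theorem Nat.two_mul_pred_mul_le (a b : ℕ) : 2 * ((a - 1) * b) ≤ (a * a - a) + (b * b - b) := by
  rcases Nat.eq_zero_or_pos a with rfl | ha
  · simp
  rcases Nat.eq_zero_or_pos b with rfl | hb
  · simp
  zify [ha, hb, Nat.le_mul_of_pos_left a ha, Nat.le_mul_of_pos_left b hb]
  -- `(a - b) * (a - b - 1) ≥ 0` for integers
  rcases le_or_gt (a : ℤ) b with hab | hab <;> nlinarith

theorem Finset.sum_pred_mul_comp_le {ι : Type*} (s : Finset ι) (f : ι → ℕ) (σ : ι → ι)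
    (hσ : Set.InjOn σ {t | 1 < f t}) (hf : ∀ t, f t ≠ 0 → t ∈ s) :
    ∑ t ∈ s, (f t - 1) * f (σ t) ≤ ∑ t ∈ s, (f t * f t - f t) := by
  set g : ι → ℕ := fun t => f t * f t - f t
  set s' := s.filter fun t => 1 < f t
  have hs' : ∑ t ∈ s, (f t - 1) * f (σ t) = ∑ t ∈ s', (f t - 1) * f (σ t) := by
    refine (sum_filter_of_ne fun t _ ht => ?_).symm
    by_contra h
    exact ht (by rw [Nat.sub_eq_zero_of_le (not_lt.mp h), zero_mul])
  have hσs' : ∑ t ∈ s', g (σ t) ≤ ∑ t ∈ s, g t := by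
    have hinj : Set.InjOn σ s' := fun x hx y hy => hσ (mem_filter.mp hx).2 (mem_filter.mp hy).2
    rw [← sum_image hinj]
    refine sum_le_sum_of_ne_zero fun u _ hu => hf u fun h => hu ?_
    simp [g, h]
  have h2 : 2 * ∑ t ∈ s', (f t - 1) * f (σ t) ≤ ∑ t ∈ s, g t + ∑ t ∈ s, g t :=
    calc 2 * ∑ t ∈ s', (f t - 1) * f (σ t)
        ≤ ∑ t ∈ s', (g t + g (σ t)) := by
          rw [mul_sum]
          exact sum_le_sum fun t _ => Nat.two_mul_pred_mul_le _ _
      _ = ∑ t ∈ s', g t + ∑ t ∈ s', g (σ t) := sum_add_distrib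
      _ ≤ ∑ t ∈ s, g t + ∑ t ∈ s, g t :=
          add_le_add (sum_le_sum_of_subset (filter_subset _ _)) hσs'
  change _ ≤ ∑ t ∈ s, g t
  omega

namespace MinArea

section Rows

def row (Q : Finset (ℝ × ℝ)) (t : ℝ) : Finset (ℝ × ℝ) := Q.filter (·.2 = t)

def horizPairs (Q : Finset (ℝ × ℝ)) : Finset ((ℝ × ℝ) × (ℝ × ℝ)) :=
  Q.offDiag.filter fun w => w.1.2 = w.2.2

def gap (w : (ℝ × ℝ) × (ℝ × ℝ)) : ℝ := w.2.1 - w.1.1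

def minGap (Q : Finset (ℝ × ℝ)) (t : ℝ) : ℝ :=
  if h : (row Q t).offDiag.Nonempty then
    ((row Q t).offDiag.image fun w => |gap w|).min' (h.image _)
  else 0

/-- Triples `((a, b), c)` with `ab` a horizontal side: `gap (a, b) * (c.2 - a.2)` is then twice
the signed area of the triangle `abc`. -/
def apexTriples (Q : Finset (ℝ × ℝ)) (e : ℝ) : Finset (((ℝ × ℝ) × (ℝ × ℝ)) × (ℝ × ℝ)) :=
  (horizPairs Q ×ˢ Q).filter fun x => gap x.1 * (x.2.2 - x.1.1.2) = e

def risingTriples (Q : Finset (ℝ × ℝ)) (e : ℝ) : Finset (((ℝ × ℝ) × (ℝ × ℝ)) × (ℝ × ℝ)) :=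
  (apexTriples Q e).filter fun x => 0 < gap x.1

def HorizAreaGE (A : ℝ) (Q : Finset (ℝ × ℝ)) : Prop :=
  ∀ w ∈ horizPairs Q, ∀ c ∈ Q, gap w * (c.2 - w.1.2) ≠ 0 → 2 * A ≤ |gap w * (c.2 - w.1.2)|

variable {Q : Finset (ℝ × ℝ)} {A e t : ℝ}

theorem mem_row {c : ℝ × ℝ} : c ∈ row Q t ↔ c ∈ Q ∧ c.2 = t := mem_filter

theorem mem_horizPairs {w : (ℝ × ℝ) × (ℝ × ℝ)} :
    w ∈ horizPairs Q ↔ w.1 ∈ Q ∧ w.2 ∈ Q ∧ w.1 ≠ w.2 ∧ w.1.2 = w.2.2 := by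
  simp only [horizPairs, mem_filter, mem_offDiag, and_assoc]

theorem mem_offDiag_row {w : (ℝ × ℝ) × (ℝ × ℝ)} :
    w ∈ (row Q t).offDiag ↔ w ∈ horizPairs Q ∧ w.1.2 = t := by
  simp only [mem_offDiag, mem_row, horizPairs, mem_filter]
  constructor
  · rintro ⟨⟨h1, rfl⟩, ⟨h2, h⟩, hne⟩
    exact ⟨⟨⟨h1, h2, hne⟩, h.symm⟩, rfl⟩
  · rintro ⟨⟨⟨h1, h2, hne⟩, h⟩, rfl⟩
    exact ⟨⟨h1, rfl⟩, ⟨h2, h.symm⟩, hne⟩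

theorem gap_ne_zero {w : (ℝ × ℝ) × (ℝ × ℝ)} (hw : w ∈ horizPairs Q) : gap w ≠ 0 := by
  obtain ⟨-, -, hne, h⟩ := mem_horizPairs.mp hw
  exact fun h0 => hne (Prod.ext (sub_eq_zero.mp h0).symm h)

theorem card_horizPairs :
    #(horizPairs Q) = ∑ t ∈ Q.image Prod.snd, (#(row Q t) * #(row Q t) - #(row Q t)) := by
  have hmaps : ∀ w ∈ horizPairs Q, w.1.2 ∈ Q.image Prod.snd := fun w hw =>
    mem_image_of_mem _ (mem_horizPairs.mp hw).1
  rw [card_eq_sum_card_fiberwise hmaps]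
  refine sum_congr rfl fun t _ => ?_
  rw [← offDiag_card]
  congr 1
  ext w
  rw [mem_offDiag_row, mem_filter]

theorem minGap_le {w : (ℝ × ℝ) × (ℝ × ℝ)} (hw : w ∈ (row Q t).offDiag) : minGap Q t ≤ |gap w| := by
  rw [minGap, dif_pos ⟨w, hw⟩]
  exact min'_le _ _ (mem_image_of_mem _ hw)

theorem exists_abs_gap_eq_minGap (h : (row Q t).offDiag.Nonempty) :
    ∃ w ∈ (row Q t).offDiag, |gap w| = minGap Q t := by
  rw [minGap, dif_pos h]
  exact mem_image.mp (min'_mem _ _)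

theorem minGap_pos (h : (row Q t).offDiag.Nonempty) : 0 < minGap Q t := by
  obtain ⟨w, hw, hmin⟩ := exists_abs_gap_eq_minGap h
  exact hmin ▸ abs_pos.mpr (gap_ne_zero (mem_offDiag_row.mp hw).1)

theorem two_mul_le_minGap_mul (hQ : HorizAreaGE A Q) (h : (row Q t).offDiag.Nonempty)
    {c : ℝ × ℝ} (hc : c ∈ Q) (hct : c.2 ≠ t) : 2 * A ≤ minGap Q t * |c.2 - t| := by
  obtain ⟨w, hw, hmin⟩ := exists_abs_gap_eq_minGap h
  obtain ⟨hwQ, rfl⟩ := mem_offDiag_row.mp hw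
  rw [← hmin, ← abs_mul]
  exact hQ w hwQ c hc (mul_ne_zero (gap_ne_zero hwQ) (sub_ne_zero.mpr hct))

theorem abs_gap_eq_minGap (hQ : HorizAreaGE A Q) (he0 : e ≠ 0) (he : |e| ≤ 2 * A)
    {w : (ℝ × ℝ) × (ℝ × ℝ)} (hw : w ∈ (row Q t).offDiag) {c : ℝ × ℝ} (hc : c ∈ Q)
    (hwc : gap w * (c.2 - t) = e) : |gap w| = minGap Q t := by
  have hct : c.2 - t ≠ 0 := right_ne_zero_of_mul (hwc ▸ he0)
  have hle := two_mul_le_minGap_mul hQ ⟨w, hw⟩ hc (sub_ne_zero.mp hct)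
  have : |gap w| * |c.2 - t| ≤ minGap Q t * |c.2 - t| := by
    rw [← abs_mul, hwc]; linarith
  exact le_antisymm (le_of_mul_le_mul_right this (abs_pos.mpr hct)) (minGap_le hw)

theorem card_filter_gap_eq_le {d : ℝ} (hd : 0 < d) :
    #((row Q t).offDiag.filter fun w => gap w = d) ≤ #(row Q t) - 1 := by
  rcases (row Q t).eq_empty_or_nonempty with h | hne
  · simp [h]
  obtain ⟨m, hm, hmax⟩ := exists_max_image (row Q t) Prod.fst hne
  rw [← card_erase_of_mem hm]
  -- `w ↦ w.1` is injective on pairs of gap `d`, and misses the rightmost point `m`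
  refine card_le_card_of_injOn Prod.fst (fun w hw => ?_) (fun w hw w' hw' h => ?_)
  · obtain ⟨hw, hgap⟩ := mem_filter.mp hw
    obtain ⟨h1, h2, -⟩ := mem_offDiag.mp hw
    refine mem_erase.mpr ⟨fun h => ?_, h1⟩
    have := hmax w.2 h2
    rw [← h, gap] at *
    linarith
  · obtain ⟨hw, hgap⟩ := mem_filter.mp hw
    obtain ⟨hw', hgap'⟩ := mem_filter.mp hw'
    obtain ⟨-, h2, -⟩ := mem_offDiag.mp hw
    obtain ⟨-, h2', -⟩ := mem_offDiag.mp hw'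
    have hx : w.2.1 = w'.2.1 := by
      simp only [gap] at hgap hgap'
      rw [show w.1 = w'.1 from h] at hgap
      linarith
    exact Prod.ext h (Prod.ext hx ((mem_row.mp h2).2.trans (mem_row.mp h2').2.symm))

theorem mem_risingTriples {x : ((ℝ × ℝ) × (ℝ × ℝ)) × (ℝ × ℝ)} :
    x ∈ risingTriples Q e ↔
      x.1 ∈ horizPairs Q ∧ x.2 ∈ Q ∧ gap x.1 * (x.2.2 - x.1.1.2) = e ∧ 0 < gap x.1 := by
  simp only [risingTriples, apexTriples, mem_filter, mem_product, and_assoc]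

theorem card_risingTriples_row_le (hQ : HorizAreaGE A Q) (he0 : e ≠ 0) (he : |e| ≤ 2 * A)
    (t : ℝ) :
    #((risingTriples Q e).filter fun x => x.1.1.2 = t) ≤
      (#(row Q t) - 1) * #(row Q (t + e / minGap Q t)) := by
  rcases ((risingTriples Q e).filter fun x => x.1.1.2 = t).eq_empty_or_nonempty with h | ⟨x₀, hx₀⟩
  · simp [h]
  obtain ⟨hx₀', rfl⟩ := mem_filter.mp hx₀
  have hd := minGap_pos ⟨x₀.1, mem_offDiag_row.mpr ⟨(mem_risingTriples.mp hx₀').1, rfl⟩⟩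
  refine le_trans (card_le_card fun x hx => ?_)
    ((card_product _ _).trans_le (Nat.mul_le_mul_right _ (card_filter_gap_eq_le hd)))
  obtain ⟨hx, ht⟩ := mem_filter.mp hx
  obtain ⟨hw, hc, hprod, hpos⟩ := mem_risingTriples.mp hx
  have hrow : x.1 ∈ (row Q x₀.1.1.2).offDiag := mem_offDiag_row.mpr ⟨hw, ht⟩
  have hgap : gap x.1 = minGap Q x₀.1.1.2 := by
    rw [← abs_gap_eq_minGap hQ he0 he hrow hc (ht ▸ hprod), abs_of_pos hpos]
  refine mem_product.mpr ⟨mem_filter.mpr ⟨hrow, hgap⟩, mem_row.mpr ⟨hc, ?_⟩⟩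
  rw [ht, hgap] at hprod
  field_simp
  linarith

/-- Two rows `t ≠ t'` are at distance at least `2 * A / minGap Q t`. -/
theorem injOn_add_div_minGap (hQ : HorizAreaGE A Q) (he0 : e ≠ 0) (he : |e| ≤ 2 * A) :
    Set.InjOn (fun t => t + e / minGap Q t) {t | 1 < #(row Q t)} := by
  have hne : ∀ {t}, 1 < #(row Q t) → (row Q t).offDiag.Nonempty := fun h => by
    obtain ⟨a, ha, b, hb, hab⟩ := one_lt_card.mp h
    exact ⟨(a, b), mem_offDiag.mpr ⟨ha, hb, hab⟩⟩
  have hfar : ∀ {t t'}, 1 < #(row Q t) → 1 < #(row Q t') → t' ≠ t →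
      |e / minGap Q t| ≤ |t' - t| := by
    intro t t' ht ht' htt'
    obtain ⟨w, hw⟩ := hne ht'
    obtain ⟨hw, hwt⟩ := mem_offDiag_row.mp hw
    have := two_mul_le_minGap_mul hQ (hne ht) (mem_horizPairs.mp hw).1 (hwt ▸ htt')
    rw [abs_div, abs_of_pos (minGap_pos (hne ht)), div_le_iff₀ (minGap_pos (hne ht)), ← hwt]
    linarith
  intro t ht t' ht' h
  by_contra htt'
  have hxy : 0 < e / minGap Q t * (e / minGap Q t') := by
    rw [div_mul_div_comm]
    exact div_pos (mul_self_pos.mpr he0) (mul_pos (minGap_pos (hne ht)) (minGap_pos (hne ht')))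
  have hdiff : t' - t = e / minGap Q t - e / minGap Q t' := by
    simp only at h
    linarith
  have h1 := hfar ht ht' (Ne.symm htt')
  have h2 := hfar ht' ht htt'
  rw [abs_sub_comm, hdiff] at h2
  rw [hdiff] at h1
  rcases pos_and_pos_or_neg_and_neg_of_mul_pos hxy with ⟨hx, hy⟩ | ⟨hx, hy⟩ <;>
  rcases abs_cases (e / minGap Q t - e / minGap Q t') with ⟨h3, -⟩ | ⟨h3, -⟩ <;>
  simp only [abs_of_pos, abs_of_neg, hx, hy, h3] at h1 h2 <;> linarith

theorem card_risingTriples_le (hQ : HorizAreaGE A Q) (he0 : e ≠ 0) (he : |e| ≤ 2 * A) :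
    #(risingTriples Q e) ≤ #(horizPairs Q) := by
  have hmaps : ∀ x ∈ risingTriples Q e, x.1.1.2 ∈ Q.image Prod.snd := fun x hx =>
    mem_image_of_mem _ (mem_horizPairs.mp (mem_risingTriples.mp hx).1).1
  have hrows : ∀ t, #(row Q t) ≠ 0 → t ∈ Q.image Prod.snd := fun t ht => by
    obtain ⟨c, hc⟩ := card_ne_zero.mp ht
    exact mem_image.mpr ⟨c, (mem_row.mp hc).1, (mem_row.mp hc).2⟩
  calc #(risingTriples Q e)
      = ∑ t ∈ Q.image Prod.snd, #((risingTriples Q e).filter fun x => x.1.1.2 = t) :=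
        card_eq_sum_card_fiberwise hmaps
    _ ≤ ∑ t ∈ Q.image Prod.snd, (#(row Q t) - 1) * #(row Q (t + e / minGap Q t)) :=
        sum_le_sum fun t _ => card_risingTriples_row_le hQ he0 he t
    _ ≤ ∑ t ∈ Q.image Prod.snd, (#(row Q t) * #(row Q t) - #(row Q t)) :=
        sum_pred_mul_comp_le _ (fun t => #(row Q t)) _ (injOn_add_div_minGap hQ he0 he) hrows
    _ = #(horizPairs Q) := card_horizPairs.symm

/-- Swapping `a` and `b` turns a falling triple into a rising one of the opposite area. -/
theorem card_filter_not_pos_gap_le (e : ℝ) :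
    #((apexTriples Q e).filter fun x => ¬ 0 < gap x.1) ≤ #(risingTriples Q (-e)) := by
  refine card_le_card_of_injOn (fun x => (x.1.swap, x.2)) (fun x hx => ?_)
    (fun x _ y _ h => ?_)
  · obtain ⟨hx, hneg⟩ := mem_filter.mp hx
    obtain ⟨hwc, hprod⟩ := mem_filter.mp hx
    obtain ⟨hw, hc⟩ := mem_product.mp hwc
    obtain ⟨h1, h2, hne, hy⟩ := mem_horizPairs.mp hw
    have hgap := gap_ne_zero hw
    refine mem_risingTriples.mpr
      ⟨mem_horizPairs.mpr ⟨h2, h1, Ne.symm hne, hy.symm⟩, hc, ?_, ?_⟩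
    · simp only [gap, Prod.fst_swap, Prod.snd_swap] at hprod ⊢
      rw [← hy]
      linarith
    · simp only [gap, Prod.fst_swap, Prod.snd_swap] at hgap hneg ⊢
      exact lt_of_le_of_ne (by linarith) (by intro h; apply hgap; linarith)
  · simp only [Prod.mk.injEq, Prod.swap_inj] at h
    exact Prod.ext h.1 h.2

theorem card_apexTriples_le (hQ : HorizAreaGE A Q) (hA : 0 < A) :
    #(apexTriples Q (2 * A)) ≤ 2 * #(horizPairs Q) := by
  have hrise := card_risingTriples_le hQ (e := 2 * A) (by positivity)
    (by rw [abs_of_pos (by positivity)])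
  have hrise' := card_risingTriples_le hQ (e := -(2 * A)) (neg_ne_zero.mpr (by positivity))
    (by rw [abs_neg, abs_of_pos (by positivity)])
  have hfall := card_filter_not_pos_gap_le (Q := Q) (2 * A)
  rw [← card_filter_add_card_filter_not (s := apexTriples Q (2 * A)) (fun x => 0 < gap x.1)]
  change #(risingTriples Q (2 * A)) + _ ≤ _
  omega

end Rows

def twiceSignedArea (p q r : Plane) : ℝ :=
  (q 0 - p 0) * (r 1 - p 1) - (q 1 - p 1) * (r 0 - p 0)

def slopeKey (p q : Plane) : ℝ × ℝ :=
  if q 0 = p 0 then (0, 1) else (1, (q 1 - p 1) / (q 0 - p 0))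

/-- A rotation (if `u.1 = 0`) or a shear, of determinant one, making direction `u` horizontal. -/
def straighten (u : ℝ × ℝ) (p : Plane) : ℝ × ℝ :=
  if u.1 = 0 then (p 1, -p 0) else (p 0, p 1 - u.2 * p 0)

def vertexSet (x : (Plane × Plane) × Plane) : Finset Plane := {x.1.1, x.1.2, x.2}

def orientedTriples (A : ℝ) (S : Finset Plane) : Finset ((Plane × Plane) × Plane) :=
  (S.offDiag ×ˢ S).filter fun x => twiceSignedArea x.1.1 x.1.2 x.2 = 2 * A

theorem triArea2_eq (p q r : Plane) : triArea2 p q r = |twiceSignedArea p q r| / 2 := rfl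

theorem twiceSignedArea_rotate (p q r : Plane) :
    twiceSignedArea q r p = twiceSignedArea p q r := by
  unfold twiceSignedArea; ring

theorem twiceSignedArea_swap (p q r : Plane) :
    twiceSignedArea p r q = -twiceSignedArea p q r := by
  unfold twiceSignedArea; ring

theorem ne_of_twiceSignedArea_ne_zero {p q r : Plane} (h : twiceSignedArea p q r ≠ 0) :
    p ≠ q ∧ q ≠ r ∧ r ≠ p := by
  refine ⟨?_, ?_, ?_⟩ <;> rintro rfl <;> exact h (by unfold twiceSignedArea; ring)

theorem two_mul_le_abs_twiceSignedArea {S : Finset Plane} {A : ℝ}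
    (hA : IsLeast (posAreaSet2 S) A) {p q r : Plane} (hp : p ∈ S) (hq : q ∈ S) (hr : r ∈ S)
    (h : twiceSignedArea p q r ≠ 0) : 2 * A ≤ |twiceSignedArea p q r| := by
  have := hA.2 ⟨p, hp, q, hq, r, hr, by rw [triArea2_eq]; positivity, rfl⟩
  rw [triArea2_eq] at this
  linarith

theorem plane_ext {p q : Plane} (h0 : p 0 = q 0) (h1 : p 1 = q 1) : p = q := by
  ext i
  fin_cases i
  exacts [h0, h1]

theorem straighten_injective (u : ℝ × ℝ) : Function.Injective (straighten u) := by
  intro p q h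
  unfold straighten at h
  split_ifs at h <;> simp only [Prod.mk.injEq, neg_inj] at h
  · exact plane_ext h.2 h.1
  · exact plane_ext h.1 (by linear_combination h.2 + u.2 * h.1)

theorem straighten_slopeKey (p q : Plane) :
    (straighten (slopeKey p q) p).2 = (straighten (slopeKey p q) q).2 := by
  unfold straighten slopeKey
  by_cases h : q 0 = p 0
  · simp [h]
  · have : q 0 - p 0 ≠ 0 := sub_ne_zero.mpr h
    simp only [h, if_false, one_ne_zero]
    field_simp
    ring

theorem twiceSignedArea_eq_gap_mul {u : ℝ × ℝ} {p q : Plane}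
    (h : (straighten u p).2 = (straighten u q).2) (r : Plane) :
    twiceSignedArea p q r =
      gap (straighten u p, straighten u q) * ((straighten u r).2 - (straighten u p).2) := by
  unfold twiceSignedArea gap straighten at *
  split_ifs at h ⊢
  · linear_combination (r 1 - p 1) * h
  · linear_combination (r 0 - p 0) * h

theorem slopeKey_eq_of_straighten {p q p' q' : Plane} (hpq : p ≠ q)
    (h : (straighten (slopeKey p' q') p).2 = (straighten (slopeKey p' q') q).2) :
    slopeKey p q = slopeKey p' q' := by
  by_cases h' : q' 0 = p' 0
  · simp only [straighten, slopeKey, h', if_true, neg_inj] at h ⊢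
    simp [h.symm]
  · simp only [straighten, slopeKey, h', if_false, one_ne_zero] at h ⊢
    have hq : q 0 ≠ p 0 := fun h0 => hpq (plane_ext h0.symm (by rw [h0] at h; linarith))
    rw [if_neg hq, Prod.mk.injEq, div_eq_iff (sub_ne_zero.mpr hq)]
    exact ⟨rfl, by linarith⟩

theorem horizAreaGE_image_straighten {A : ℝ} {S : Finset Plane}
    (hS : ∀ p ∈ S, ∀ q ∈ S, ∀ r ∈ S, twiceSignedArea p q r ≠ 0 →
      2 * A ≤ |twiceSignedArea p q r|) (u : ℝ × ℝ) :
    HorizAreaGE A (S.image (straighten u)) := by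
  rintro ⟨a, b⟩ hw c hc
  obtain ⟨ha, hb, -, hy⟩ := mem_horizPairs.mp hw
  obtain ⟨p, hp, rfl⟩ := mem_image.mp ha
  obtain ⟨q, hq, rfl⟩ := mem_image.mp hb
  obtain ⟨r, hr, rfl⟩ := mem_image.mp hc
  rw [← twiceSignedArea_eq_gap_mul hy r]
  exact hS p hp q hq r hr

theorem mem_orientedTriples {A : ℝ} {S : Finset Plane} {x : (Plane × Plane) × Plane} :
    x ∈ orientedTriples A S ↔ x.1.1 ∈ S ∧ x.1.2 ∈ S ∧ x.1.1 ≠ x.1.2 ∧ x.2 ∈ S ∧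
      twiceSignedArea x.1.1 x.1.2 x.2 = 2 * A := by
  simp only [orientedTriples, mem_filter, mem_product, mem_offDiag, and_assoc]

theorem card_filter_slopeKey_orientedTriples_le (A : ℝ) (S : Finset Plane) (u : ℝ × ℝ) :
    #((orientedTriples A S).filter fun x => slopeKey x.1.1 x.1.2 = u) ≤
      #(apexTriples (S.image (straighten u)) (2 * A)) := by
  have hφ := straighten_injective u
  refine card_le_card_of_injOn (Prod.map (Prod.map (straighten u) (straighten u)) (straighten u))
    (fun x hx => ?_) ((hφ.prodMap hφ).prodMap hφ).injOn
  obtain ⟨hx', rfl⟩ := mem_filter.mp hx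
  obtain ⟨hp, hq, hpq, hr, harea⟩ := mem_orientedTriples.mp hx'
  have hy := straighten_slopeKey x.1.1 x.1.2
  refine mem_filter.mpr ⟨mem_product.mpr ⟨mem_horizPairs.mpr ⟨mem_image_of_mem _ hp,
    mem_image_of_mem _ hq, hφ.ne hpq, hy⟩, mem_image_of_mem _ hr⟩, ?_⟩
  rw [← harea, twiceSignedArea_eq_gap_mul hy]
  rfl

theorem card_horizPairs_image_straighten_le (S : Finset Plane) (p' q' : Plane) :
    #(horizPairs (S.image (straighten (slopeKey p' q')))) ≤
      #(S.offDiag.filter fun w => slopeKey w.1 w.2 = slopeKey p' q') := by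
  let φ := straighten (slopeKey p' q')
  refine le_trans (card_le_card fun w hw => ?_) (card_image_le (f := Prod.map φ φ))
  obtain ⟨ha, hb, hne, hy⟩ := mem_horizPairs.mp hw
  obtain ⟨p, hp, hpa⟩ := mem_image.mp ha
  obtain ⟨q, hq, hqb⟩ := mem_image.mp hb
  have hpq : p ≠ q := by rintro rfl; exact hne (hpa.symm.trans hqb)
  refine mem_image.mpr ⟨(p, q), mem_filter.mpr ⟨mem_offDiag.mpr ⟨hp, hq, hpq⟩,
    slopeKey_eq_of_straighten hpq (by rw [hpa, hqb]; exact hy)⟩, Prod.ext hpa hqb⟩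

theorem card_orientedTriples_le {A : ℝ} {S : Finset Plane} (hA : 0 < A)
    (hS : ∀ p ∈ S, ∀ q ∈ S, ∀ r ∈ S, twiceSignedArea p q r ≠ 0 →
      2 * A ≤ |twiceSignedArea p q r|) :
    #(orientedTriples A S) ≤ 2 * #S.offDiag := by
  set K := S.offDiag.image fun w => slopeKey w.1 w.2
  have hK : ∀ x ∈ orientedTriples A S, slopeKey x.1.1 x.1.2 ∈ K := fun x hx =>
    mem_image_of_mem _ (mem_product.mp (mem_filter.mp hx).1).1
  have hK' : ∀ w ∈ S.offDiag, slopeKey w.1 w.2 ∈ K := fun w hw => mem_image_of_mem _ hw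
  rw [card_eq_sum_card_fiberwise hK, card_eq_sum_card_fiberwise hK', mul_sum]
  refine sum_le_sum fun u hu => ?_
  obtain ⟨⟨p', q'⟩, -, rfl⟩ := mem_image.mp hu
  calc _ ≤ #(apexTriples (S.image (straighten (slopeKey p' q'))) (2 * A)) :=
        card_filter_slopeKey_orientedTriples_le A S _
    _ ≤ 2 * #(horizPairs (S.image (straighten (slopeKey p' q')))) :=
        card_apexTriples_le (horizAreaGE_image_straighten hS _) hA
    _ ≤ _ := Nat.mul_le_mul_left 2 (card_horizPairs_image_straighten_le S p' q')

theorem areaTripleCount2_le_card_image {A : ℝ} (hA : 0 < A) (S : Finset Plane) :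
    areaTripleCount2 S A ≤
      #((orientedTriples A S).image vertexSet) := by
  rw [areaTripleCount2, ← Set.ncard_coe_finset]
  refine Set.ncard_le_ncard (fun T hT => ?_)
  obtain ⟨hTS, -, a, b, c, rfl, harea⟩ := hT
  simp only [insert_subset_iff, singleton_subset_iff] at hTS
  obtain ⟨ha, hb, hc⟩ := hTS
  rw [triArea2_eq] at harea
  have habs : |twiceSignedArea a b c| = 2 * A := by linarith
  obtain ⟨hab, hbc, hca⟩ := ne_of_twiceSignedArea_ne_zero (p := a) (q := b) (r := c)
    (fun h => by rw [h, abs_zero] at habs; linarith)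
  rcases (abs_eq (by positivity)).mp habs with h | h
  · exact mem_image.mpr ⟨((a, b), c), mem_orientedTriples.mpr ⟨ha, hb, hab, hc, h⟩, rfl⟩
  · refine mem_image.mpr ⟨((a, c), b), mem_orientedTriples.mpr
      ⟨ha, hc, hca.symm, hb, by rw [twiceSignedArea_swap, h, neg_neg]⟩, ?_⟩
    simp only [vertexSet, pair_comm]

theorem three_mul_card_image_le {A : ℝ} (hA : A ≠ 0) (S : Finset Plane) :
    3 * #((orientedTriples A S).image vertexSet) ≤
      #(orientedTriples A S) := by
  refine mul_card_image_le_card _ 3 fun T hT => ?_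
  obtain ⟨⟨⟨p, q⟩, r⟩, hx, rfl⟩ := mem_image.mp hT
  obtain ⟨hp, hq, -, hr, harea⟩ := mem_orientedTriples.mp hx
  obtain ⟨hpq, hqr, hrp⟩ := ne_of_twiceSignedArea_ne_zero (p := p) (q := q) (r := r)
    (harea ▸ mul_ne_zero two_ne_zero hA)
  have hsub : {((p, q), r), ((q, r), p), ((r, p), q)} ⊆ (orientedTriples A S).filter
      fun x => vertexSet x = vertexSet ((p, q), r) := by
    intro x hx
    simp only [mem_insert, mem_singleton] at hx
    rcases hx with rfl | rfl | rfl
    · exact mem_filter.mpr ⟨hx, rfl⟩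
    · refine mem_filter.mpr ⟨mem_orientedTriples.mpr
        ⟨hq, hr, hqr, hp, by rw [twiceSignedArea_rotate, harea]⟩, ?_⟩
      ext; simp only [vertexSet, mem_insert, mem_singleton]; tauto
    · refine mem_filter.mpr ⟨mem_orientedTriples.mpr
        ⟨hr, hp, hrp, hq, by rw [← twiceSignedArea_rotate, harea]⟩, ?_⟩
      ext; simp only [vertexSet, mem_insert, mem_singleton]; tauto
  refine le_of_eq_of_le ?_ (card_le_card hsub)
  exact (card_eq_three.mpr ⟨_, _, _, fun h => hpq (congrArg (·.1.1) h),
    fun h => hrp (congrArg (·.1.1) h).symm, fun h => hqr (congrArg (·.1.1) h), rfl⟩).symm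

theorem three_mul_areaTripleCount2_le {A : ℝ} (hA : 0 < A) (S : Finset Plane) :
    3 * areaTripleCount2 S A ≤ #(orientedTriples A S) :=
  (Nat.mul_le_mul_left 3 (areaTripleCount2_le_card_image hA S)).trans
    (three_mul_card_image_le hA.ne' S)

end MinArea

end

theorem min_area_triangles_plane_two_thirds_general (n : ℕ) (S : Finset Plane)
    (hS : S.card = n) (A : ℝ) (hA : IsLeast (posAreaSet2 S) A) :
    (areaTripleCount2 S A : ℝ) ≤ (2 / 3) * ((n : ℝ) ^ 2 - n) := by
  have hApos : 0 < A := by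
    obtain ⟨a, -, b, -, c, -, hpos, rfl⟩ := hA.1
    exact hpos
  have hcount : 3 * areaTripleCount2 S A ≤ 2 * (n * n - n) := by
    rw [← hS, ← offDiag_card]
    calc 3 * areaTripleCount2 S A ≤ #(MinArea.orientedTriples A S) :=
          MinArea.three_mul_areaTripleCount2_le hApos S
      _ ≤ 2 * #S.offDiag := MinArea.card_orientedTriples_le hApos
          fun _ hp _ hq _ hr => MinArea.two_mul_le_abs_twiceSignedArea hA hp hq hr
  have hcast := (Nat.cast_le (α := ℝ)).mpr hcount
  push_cast [Nat.cast_sub (Nat.le_mul_self n)] at hcast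
  linarith

/-- `n` points in the plane span at most `(2/3)·(n² − n)` triangles of minimum
(nonzero) area. -/
theorem min_area_triangles_plane_two_thirds (n : ℕ) (S : Finset Plane)
    (hS : S.card = n) (A : ℝ) (hApos : 0 < A) (hA : IsLeast (posAreaSet2 S) A) :
    (areaTripleCount2 S A : ℝ) ≤ (2 / 3) * ((n : ℝ) ^ 2 - n) :=
  min_area_triangles_plane_two_thirds_general n S hS A hA
end

section
/- There is a constant C > 0 such that for every n and every set S of n points in the plane ℝ² spanning at least one nondegenerate triangle, with A > 0 the minimum area over all nondegenerate triangles spanned by S, the number of unordered triples of distinct points of S that form an acute triangle of area exactly A is at most C · n. -/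
open scoped Classical

/-- A triangle is acute if all three interior angles are strictly less than
`π/2`. -/
def IsAcuteTriangle (a b c : Plane) : Prop :=
  EuclideanGeometry.angle b a c < Real.pi / 2 ∧
  EuclideanGeometry.angle a b c < Real.pi / 2 ∧
  EuclideanGeometry.angle a c b < Real.pi / 2

/-- The number of unordered triples of distinct points of `S` that span an
acute triangle of area exactly `A`. -/
noncomputable def acuteAreaTripleCount2 (S : Finset Plane) (A : ℝ) : ℕ :=
  Set.ncard {T : Finset Plane | T ⊆ S ∧ T.card = 3 ∧
    ∃ a b c : Plane, T = {a, b, c} ∧ triArea2 a b c = A ∧ IsAcuteTriangle a b c}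

/-!
Label each acute triangle of minimum area `A` as `c a b`, where `c` is opposite a longest side and
`ca` is a shortest side. For fixed `c` and `a`, the vertex `b` lies on one of the two lines
parallel to `ca` at distance `2A / |ca|` and projects into the segment `ca`; two such `b` on one
line would span with `a` a triangle of area less than `A`, so there are at most two choices of `b`.
For fixed `c`, every such `a` has `|ca|² ≤ 4A / √3`; two of them seen from `c` under an angle less
than `π / 3` would span with `c` a triangle of area less than `A` (or, if aligned, the nearer one
would cut a minimal triangle of the farther one), so at most six `a` occur. Each `c` thus accounts
for at most twelve triangles.
-/

open Real
open scoped RealInnerProductSpace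

noncomputable def cross (u v : Plane) : ℝ := u 0 * v 1 - u 1 * v 0

lemma triArea2_eq (a b c : Plane) : triArea2 a b c = |cross (b - a) (c - a)| / 2 := rfl

lemma cross_swap (u v : Plane) : cross v u = -cross u v := by
  simp only [cross]; ring

lemma cross_sub_sub_rotate (a b c : Plane) :
    cross (b - a) (c - a) = cross (c - b) (a - b) := by
  simp only [cross, PiLp.sub_apply]; ring

lemma inner_eq_coords (u v : Plane) : ⟪u, v⟫ = u 0 * v 0 + u 1 * v 1 := by
  simp [PiLp.inner_apply, Fin.sum_univ_two, mul_comm]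

lemma norm_sq_eq_coords (u : Plane) : ‖u‖ ^ 2 = u 0 ^ 2 + u 1 ^ 2 := by
  simp [EuclideanSpace.norm_sq_eq, Fin.sum_univ_two]

lemma inner_sq_add_cross_sq (u v : Plane) :
    ⟪u, v⟫ ^ 2 + cross u v ^ 2 = ‖u‖ ^ 2 * ‖v‖ ^ 2 := by
  rw [inner_eq_coords, norm_sq_eq_coords, norm_sq_eq_coords, cross]; ring

lemma eq_zero_of_inner_eq_zero_of_cross_eq_zero {u w : Plane} (hu : u ≠ 0)
    (hi : ⟪u, w⟫ = 0) (hc : cross u w = 0) : w = 0 := by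
  have h := inner_sq_add_cross_sq u w
  rw [hi, hc] at h
  have hw : ‖w‖ ^ 2 = 0 := by
    have : ‖u‖ ^ 2 ≠ 0 := by positivity
    simpa [this] using h.symm
  simpa using hw

noncomputable def planeArg (u : Plane) : ℝ := (Complex.orthonormalBasisOneI.repr.symm u).arg

lemma planeArg_mem_Ioc (u : Plane) : planeArg u ∈ Set.Ioc (-π) π :=
  ⟨Complex.neg_pi_lt_arg _, Complex.arg_le_pi _⟩

lemma norm_mul_cos_planeArg (u : Plane) : ‖u‖ * cos (planeArg u) = u 0 := by
  have h := Complex.norm_mul_cos_arg (Complex.orthonormalBasisOneI.repr.symm u)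
  simp only [LinearIsometryEquiv.norm_map] at h
  simpa [planeArg] using h

lemma norm_mul_sin_planeArg (u : Plane) : ‖u‖ * sin (planeArg u) = u 1 := by
  have h := Complex.norm_mul_sin_arg (Complex.orthonormalBasisOneI.repr.symm u)
  simp only [LinearIsometryEquiv.norm_map] at h
  simpa [planeArg] using h

lemma cross_eq_norm_mul_norm_mul_sin (u v : Plane) :
    cross u v = ‖u‖ * ‖v‖ * sin (planeArg v - planeArg u) := by
  rw [cross, sin_sub, ← norm_mul_cos_planeArg u, ← norm_mul_sin_planeArg u,
    ← norm_mul_cos_planeArg v, ← norm_mul_sin_planeArg v]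
  ring

lemma norm_smul_eq_norm_smul_of_planeArg_eq {u v : Plane} (h : planeArg u = planeArg v) :
    ‖v‖ • u = ‖u‖ • v := by
  ext i
  fin_cases i
  · simp only [PiLp.smul_apply, smul_eq_mul, Fin.zero_eta]
    rw [← norm_mul_cos_planeArg u, ← norm_mul_cos_planeArg v, h]; ring
  · simp only [PiLp.smul_apply, smul_eq_mul, Fin.mk_one]
    rw [← norm_mul_sin_planeArg u, ← norm_mul_sin_planeArg v, h]; ring

lemma inner_pos_of_angle_lt_pi_div_two {V : Type*} [NormedAddCommGroup V]
    [InnerProductSpace ℝ V] {x y : V} (h : InnerProductGeometry.angle x y < π / 2) :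
    0 < ⟪x, y⟫ := by
  have hx : x ≠ 0 := by rintro rfl; simp at h
  have hy : y ≠ 0 := by rintro rfl; simp at h
  rw [← InnerProductGeometry.cos_angle_mul_norm_mul_norm]
  have hcos : 0 < cos (InnerProductGeometry.angle x y) :=
    cos_pos_of_mem_Ioo ⟨by linarith [InnerProductGeometry.angle_nonneg x y, pi_pos], h⟩
  positivity

lemma sq_sin_lt_of_abs_lt_pi_div_three {x : ℝ} (h : |x| < π / 3) : sin x ^ 2 < 3 / 4 := by
  have hcos : 1 / 2 < cos x := by
    rw [← cos_abs, ← cos_pi_div_three]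
    exact cos_lt_cos_of_nonneg_of_le_pi_div_two (abs_nonneg x) (by linarith [pi_pos]) h
  nlinarith [sin_sq_add_cos_sq x]

lemma Finset.card_le_of_le_abs_sub {ι : Type*} {s : Finset ι} {f : ι → ℝ} {a δ : ℝ} {n : ℕ}
    (hδ : 0 < δ) (hf : ∀ i ∈ s, f i ∈ Set.Ioc a (a + n * δ))
    (hsep : ∀ i ∈ s, ∀ j ∈ s, i ≠ j → δ ≤ |f i - f j|) : s.card ≤ n := by
  have hsector (i : ι) (hi : i ∈ s) : ⌈(f i - a) / δ⌉ ∈ Finset.Icc (1 : ℤ) n := by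
    obtain ⟨h₁, h₂⟩ := hf i hi
    rw [Finset.mem_Icc, Int.one_le_ceil_iff, Int.ceil_le]
    constructor
    · exact div_pos (by linarith) hδ
    · rw [div_le_iff₀ hδ]; push_cast; linarith
  calc s.card ≤ (Finset.Icc (1 : ℤ) n).card := by
        refine Finset.card_le_card_of_injOn (fun i => ⌈(f i - a) / δ⌉) hsector ?_
        intro i hi j hj hij
        by_contra hne
        have hij' : (⌈(f i - a) / δ⌉ : ℝ) = ⌈(f j - a) / δ⌉ := congrArg _ hij
        have hclose : |(f i - a) / δ - (f j - a) / δ| < 1 := by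
          rw [abs_sub_lt_iff]
          constructor <;> linarith [Int.le_ceil ((f i - a) / δ),
            Int.ceil_lt_add_one ((f i - a) / δ), Int.le_ceil ((f j - a) / δ),
            Int.ceil_lt_add_one ((f j - a) / δ)]
        rw [← sub_div, sub_sub_sub_cancel_right, abs_div, abs_of_pos hδ, div_lt_one hδ] at hclose
        exact (hsep i hi j hj hne).not_gt hclose
    _ = n := by simp

section MinimalArea

variable {S : Finset Plane} {A : ℝ}

lemma pos_of_isLeast_posAreaSet2 (hL : IsLeast (posAreaSet2 S) A) : 0 < A := by
  obtain ⟨a, -, b, -, c, -, hpos, rfl⟩ := hL.1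
  exact hpos

lemma two_mul_le_abs_cross (hL : IsLeast (posAreaSet2 S) A) {p q r : Plane}
    (hp : p ∈ S) (hq : q ∈ S) (hr : r ∈ S) (h : cross (q - p) (r - p) ≠ 0) :
    2 * A ≤ |cross (q - p) (r - p)| := by
  have hA := hL.2 ⟨p, hp, q, hq, r, hr, by rw [triArea2_eq]; positivity, rfl⟩
  rw [triArea2_eq] at hA
  linarith

end MinimalArea

/-- An acute triangle `c a b` of area `A` with `ab` a longest and `ca` a shortest side; acuteness
at `c`, the largest angle, is all that has to be required. -/
structure IsAnchored (A : ℝ) (c a b : Plane) : Prop where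
  abs_cross : |cross (a - c) (b - c)| = 2 * A
  inner_pos : 0 < ⟪a - c, b - c⟫
  shortest_side : ‖a - c‖ ≤ ‖b - c‖
  longest_side : ‖b - c‖ ≤ ‖b - a‖

namespace IsAnchored

variable {S : Finset Plane} {A : ℝ} {a b c : Plane}

lemma sub_ne_zero (h : IsAnchored A c a b) : a - c ≠ 0 := by
  intro h0
  simpa [h0] using h.inner_pos

lemma two_inner_le (h : IsAnchored A c a b) : 2 * ⟪a - c, b - c⟫ ≤ ‖a - c‖ ^ 2 := by
  have hba : ‖b - a‖ ^ 2 = ‖b - c‖ ^ 2 - 2 * ⟪a - c, b - c⟫ + ‖a - c‖ ^ 2 := by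
    rw [← sub_sub_sub_cancel_right b a c, norm_sub_sq_real, real_inner_comm]
  nlinarith [h.longest_side, norm_nonneg (b - c)]

lemma sq_norm_sq_le (h : IsAnchored A c a b) : 3 * (‖a - c‖ ^ 2) ^ 2 ≤ 16 * A ^ 2 := by
  have hlagrange := inner_sq_add_cross_sq (a - c) (b - c)
  rw [← sq_abs (cross _ _), h.abs_cross] at hlagrange
  have hle : ‖a - c‖ ^ 2 ≤ ‖b - c‖ ^ 2 := pow_le_pow_left₀ (norm_nonneg _) h.shortest_side 2
  nlinarith [h.inner_pos, h.two_inner_le, sq_nonneg (‖a - c‖)]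

lemma eq_of_cross_eq {b' : Plane} (hL : IsLeast (posAreaSet2 S) A) (ha : a ∈ S) (hb : b ∈ S)
    (hb' : b' ∈ S) (h : IsAnchored A c a b) (h' : IsAnchored A c a b')
    (hcross : cross (a - c) (b - c) = cross (a - c) (b' - c)) : b = b' := by
  have hA := pos_of_isLeast_posAreaSet2 hL
  set u := a - c
  have hparallel : cross u (b - b') = 0 := by
    rw [← sub_sub_sub_cancel_right b b' c]
    simp only [cross, PiLp.sub_apply] at hcross ⊢
    linarith
  -- `b - b'` is parallel to `u`, so the triangle `a b b'` has area `|⟪u, b - b'⟫| / ‖u‖² * A`.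
  have hkey : ‖u‖ ^ 2 * cross (b - a) (b' - a) = ⟪u, b - b'⟫ * cross u (b - c) := by
    simp only [cross, inner_eq_coords, norm_sq_eq_coords, PiLp.sub_apply, u] at hparallel ⊢
    linear_combination
      ((a 0 - c 0) ^ 2 + (a 1 - c 1) ^ 2 - (a 0 - c 0) * (b 0 - c 0) - (a 1 - c 1) * (b 1 - c 1)) *
        hparallel
  have hinner : |⟪u, b - b'⟫| < ‖u‖ ^ 2 := by
    rw [← sub_sub_sub_cancel_right b b' c, inner_sub_right, abs_sub_lt_iff]
    constructor <;> linarith [h.inner_pos, h.two_inner_le, h'.inner_pos, h'.two_inner_le]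
  have hu : 0 < ‖u‖ ^ 2 := by have := h.sub_ne_zero; positivity
  have hsmall : |cross (b - a) (b' - a)| < 2 * A := by
    have habs := congrArg abs hkey
    rw [abs_mul, abs_mul, h.abs_cross, abs_of_pos hu] at habs
    nlinarith
  have hflat : cross (b - a) (b' - a) = 0 := by
    by_contra hne
    exact (two_mul_le_abs_cross hL ha hb hb' hne).not_gt hsmall
  have horth : ⟪u, b - b'⟫ = 0 := by
    have hcross_ne : cross u (b - c) ≠ 0 := by
      intro h0
      have := h.abs_cross
      rw [h0, abs_zero] at this
      linarith
    rw [hflat, mul_zero] at hkey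
    exact (mul_eq_zero.mp hkey.symm).resolve_right hcross_ne
  exact _root_.sub_eq_zero.mp
    (eq_zero_of_inner_eq_zero_of_cross_eq_zero h.sub_ne_zero horth hparallel)

lemma smul_sub_ne_smul_sub {a' b' : Plane} (hL : IsLeast (posAreaSet2 S) A) (ha : a ∈ S)
    (ha' : a' ∈ S) (hb' : b' ∈ S) (h' : IsAnchored A c a' b') {ρ ρ' : ℝ} (hρ : 0 < ρ)
    (hρρ' : ρ < ρ') : ρ' • (a - c) ≠ ρ • (a' - c) := by
  intro hray
  have hray₀ := congrArg (· 0) hray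
  have hray₁ := congrArg (· 1) hray
  simp only [PiLp.smul_apply, PiLp.sub_apply, smul_eq_mul] at hray₀ hray₁
  -- `a` lies strictly between `c` and `a'`, so `a a' b'` is a proper part of `c a' b'`.
  have hshrink : ρ' * cross (a' - a) (b' - a) = (ρ' - ρ) * cross (a' - c) (b' - c) := by
    simp only [cross, PiLp.sub_apply]
    linear_combination (a' 1 - b' 1) * hray₀ + (b' 0 - a' 0) * hray₁
  have hA := pos_of_isLeast_posAreaSet2 hL
  have habs := congrArg abs hshrink
  rw [abs_mul, abs_mul, h'.abs_cross, abs_of_pos (by linarith : 0 < ρ'),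
    abs_of_pos (by linarith : 0 < ρ' - ρ)] at habs
  have hne : cross (a' - a) (b' - a) ≠ 0 := by
    intro h0
    rw [h0, abs_zero, mul_zero] at habs
    nlinarith
  have := two_mul_le_abs_cross hL ha ha' hb' hne
  nlinarith

lemma pi_div_three_le_abs_planeArg_sub {a' b' : Plane} (hL : IsLeast (posAreaSet2 S) A)
    (hc : c ∈ S) (ha : a ∈ S) (ha' : a' ∈ S) (hb : b ∈ S) (hb' : b' ∈ S)
    (h : IsAnchored A c a b) (h' : IsAnchored A c a' b') (hne : a ≠ a') :
    π / 3 ≤ |planeArg (a - c) - planeArg (a' - c)| := by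
  by_contra! hclose
  have hρ : 0 < ‖a - c‖ := norm_pos_iff.mpr h.sub_ne_zero
  have hρ' : 0 < ‖a' - c‖ := norm_pos_iff.mpr h'.sub_ne_zero
  by_cases hdir : planeArg (a - c) = planeArg (a' - c)
  · have hray := norm_smul_eq_norm_smul_of_planeArg_eq hdir
    rcases lt_trichotomy ‖a - c‖ ‖a' - c‖ with hlt | heq | hgt
    · exact h'.smul_sub_ne_smul_sub hL ha ha' hb' hρ hlt hray
    · rw [heq, smul_right_inj hρ'.ne'] at hray
      exact hne (sub_left_injective hray)
    · exact h.smul_sub_ne_smul_sub hL ha' ha hb hρ' hgt hray.symm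
  · have hclose' : |planeArg (a' - c) - planeArg (a - c)| < π / 3 := by
      rwa [abs_sub_comm]
    have hsin : sin (planeArg (a' - c) - planeArg (a - c)) ≠ 0 := by
      rw [Ne, sin_eq_zero_iff_of_lt_of_lt (by linarith [neg_abs_le (planeArg (a' - c) -
        planeArg (a - c)), pi_pos]) (by linarith [le_abs_self (planeArg (a' - c) -
        planeArg (a - c)), pi_pos]), sub_eq_zero]
      exact Ne.symm hdir
    have hcross := cross_eq_norm_mul_norm_mul_sin (a - c) (a' - c)
    have hmin := two_mul_le_abs_cross hL hc ha ha'
      (by rw [hcross]; exact mul_ne_zero (by positivity) hsin)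
    rw [hcross, abs_mul, abs_of_pos (by positivity)] at hmin
    -- `a` and `a'` lie within `(16/3)^(1/4) √A` of `c`, so an angle below `π / 3` at `c`
    -- would make `c a a'` smaller than minimal.
    have hsq := sq_sin_lt_of_abs_lt_pi_div_three hclose'
    have hX := h.sq_norm_sq_le
    have hY := h'.sq_norm_sq_le
    have hA := pos_of_isLeast_posAreaSet2 hL
    have hXY : 3 * (‖a - c‖ ^ 2 * ‖a' - c‖ ^ 2) ≤ 16 * A ^ 2 := by
      nlinarith [sq_nonneg (‖a - c‖ ^ 2 - ‖a' - c‖ ^ 2)]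
    have h4A : 4 * A ^ 2 ≤ ‖a - c‖ ^ 2 * ‖a' - c‖ ^ 2 *
        sin (planeArg (a' - c) - planeArg (a - c)) ^ 2 := by
      have := pow_le_pow_left₀ (by positivity) hmin 2
      rw [← sq_abs (sin _)]
      nlinarith
    nlinarith [mul_pos (pow_pos hρ 2) (pow_pos hρ' 2)]

end IsAnchored

lemma isAnchored_or_isAnchored_of_longest {A : ℝ} {a b c : Plane}
    (hcross : |cross (a - c) (b - c)| = 2 * A) (hinner : 0 < ⟪a - c, b - c⟫)
    (hac : ‖a - c‖ ≤ ‖a - b‖) (hbc : ‖b - c‖ ≤ ‖a - b‖) :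
    IsAnchored A c a b ∨ IsAnchored A c b a := by
  rcases le_total ‖a - c‖ ‖b - c‖ with h | h
  · exact .inl ⟨hcross, hinner, h, by rwa [norm_sub_rev b a]⟩
  · exact .inr ⟨by rwa [cross_swap, abs_neg], by rwa [real_inner_comm], h, hac⟩

lemma exists_isAnchored {A : ℝ} {a b c : Plane} (hacute : IsAcuteTriangle a b c)
    (harea : triArea2 a b c = A) :
    ∃ x y z, ({x, y, z} : Finset Plane) = {a, b, c} ∧ IsAnchored A z x y := by
  obtain ⟨hangleA, hangleB, hangleC⟩ := hacute
  have hinnerA : 0 < ⟪b - a, c - a⟫ := inner_pos_of_angle_lt_pi_div_two hangleA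
  have hinnerB : 0 < ⟪c - b, a - b⟫ := by
    rw [real_inner_comm]; exact inner_pos_of_angle_lt_pi_div_two hangleB
  have hinnerC : 0 < ⟪a - c, b - c⟫ := inner_pos_of_angle_lt_pi_div_two hangleC
  have hcrossA : |cross (b - a) (c - a)| = 2 * A := by rw [triArea2_eq] at harea; linarith
  have hcrossB : |cross (c - b) (a - b)| = 2 * A := by rwa [← cross_sub_sub_rotate]
  have hcrossC : |cross (a - c) (b - c)| = 2 * A := by rwa [← cross_sub_sub_rotate]
  have hlongest : (‖a - c‖ ≤ ‖a - b‖ ∧ ‖b - c‖ ≤ ‖a - b‖) ∨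
      (‖b - a‖ ≤ ‖b - c‖ ∧ ‖c - a‖ ≤ ‖b - c‖) ∨ (‖c - b‖ ≤ ‖c - a‖ ∧ ‖a - b‖ ≤ ‖c - a‖) := by
    rw [norm_sub_rev c a, norm_sub_rev b a, norm_sub_rev c b]
    grind
  rcases hlongest with ⟨h₁, h₂⟩ | ⟨h₁, h₂⟩ | ⟨h₁, h₂⟩
  · rcases isAnchored_or_isAnchored_of_longest hcrossC hinnerC h₁ h₂ with h | h
    · exact ⟨a, b, c, rfl, h⟩
    · exact ⟨b, a, c, Finset.insert_comm _ _ _, h⟩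
  · rcases isAnchored_or_isAnchored_of_longest hcrossA hinnerA h₁ h₂ with h | h
    · exact ⟨b, c, a, by ext; simp only [Finset.mem_insert, Finset.mem_singleton]; tauto, h⟩
    · exact ⟨c, b, a, by ext; simp only [Finset.mem_insert, Finset.mem_singleton]; tauto, h⟩
  · rcases isAnchored_or_isAnchored_of_longest hcrossB hinnerB h₁ h₂ with h | h
    · exact ⟨c, a, b, by ext; simp only [Finset.mem_insert, Finset.mem_singleton]; tauto, h⟩
    · exact ⟨a, c, b, by ext; simp only [Finset.mem_insert, Finset.mem_singleton]; tauto, h⟩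

section Counting

variable {S : Finset Plane} {A : ℝ}

noncomputable def anchorsAt (S : Finset Plane) (A : ℝ) (c : Plane) : Finset Plane :=
  S.filter fun a => ∃ b ∈ S, IsAnchored A c a b

noncomputable def anchoredTriangles (S : Finset Plane) (A : ℝ) : Finset (Finset Plane) :=
  S.biUnion fun c => (anchorsAt S A c).biUnion fun a =>
    (S.filter (IsAnchored A c a)).image fun b => {a, b, c}

lemma card_anchorsAt_le_six (hL : IsLeast (posAreaSet2 S) A) {c : Plane} (hc : c ∈ S) :
    (anchorsAt S A c).card ≤ 6 := by
  refine Finset.card_le_of_le_abs_sub (f := fun a => planeArg (a - c)) (a := -π)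
    (by positivity : 0 < π / 3) (fun a _ => ?_) ?_
  · convert planeArg_mem_Ioc (a - c) using 2
    push_cast
    ring
  · intro a ha a' ha' hne
    obtain ⟨ha, b, hb, h⟩ := Finset.mem_filter.mp ha
    obtain ⟨ha', b', hb', h'⟩ := Finset.mem_filter.mp ha'
    exact h.pi_div_three_le_abs_planeArg_sub hL hc ha ha' hb hb' h' hne

lemma card_filter_isAnchored_le_two (hL : IsLeast (posAreaSet2 S) A) {a c : Plane}
    (ha : a ∈ S) : (S.filter (IsAnchored A c a)).card ≤ 2 := by
  calc (S.filter (IsAnchored A c a)).card ≤ ({2 * A, -(2 * A)} : Finset ℝ).card := by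
        refine Finset.card_le_card_of_injOn (fun b => cross (a - c) (b - c)) ?_ ?_
        · intro b hb
          have := (abs_eq (by linarith [pos_of_isLeast_posAreaSet2 hL])).mp
            (Finset.mem_filter.mp hb).2.abs_cross
          simpa using this
        · intro b hb b' hb' hcross
          obtain ⟨hb, h⟩ := Finset.mem_filter.mp hb
          obtain ⟨hb', h'⟩ := Finset.mem_filter.mp hb'
          exact h.eq_of_cross_eq hL ha hb hb' h' hcross
    _ ≤ 2 := Finset.card_le_two

lemma card_anchoredTriangles_le (hL : IsLeast (posAreaSet2 S) A) :
    (anchoredTriangles S A).card ≤ 12 * S.card := by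
  calc (anchoredTriangles S A).card
      ≤ ∑ c ∈ S, ∑ a ∈ anchorsAt S A c, (S.filter (IsAnchored A c a)).card := by
        refine Finset.card_biUnion_le.trans (Finset.sum_le_sum fun c _ => ?_)
        exact Finset.card_biUnion_le.trans
          (Finset.sum_le_sum fun a _ => Finset.card_image_le)
    _ ≤ ∑ c ∈ S, ∑ a ∈ anchorsAt S A c, 2 := by
        gcongr with c _ a ha
        exact card_filter_isAnchored_le_two hL (Finset.mem_filter.mp ha).1
    _ ≤ ∑ c ∈ S, 12 := by
        gcongr with c hc
        rw [Finset.sum_const, smul_eq_mul]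
        linarith [card_anchorsAt_le_six hL hc]
    _ = 12 * S.card := by rw [Finset.sum_const, smul_eq_mul, mul_comm]

lemma mem_anchoredTriangles {a b c : Plane}
    (hS : ({a, b, c} : Finset Plane) ⊆ S) (harea : triArea2 a b c = A)
    (hacute : IsAcuteTriangle a b c) : ({a, b, c} : Finset Plane) ∈ anchoredTriangles S A := by
  obtain ⟨x, y, z, hxyz, h⟩ := exists_isAnchored hacute harea
  rw [← hxyz] at hS ⊢
  have hx : x ∈ S := hS (by simp)
  have hy : y ∈ S := hS (by simp)
  have hz : z ∈ S := hS (by simp)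
  refine Finset.mem_biUnion.mpr ⟨z, hz, Finset.mem_biUnion.mpr ⟨x, ?_, ?_⟩⟩
  · exact Finset.mem_filter.mpr ⟨hx, y, hy, h⟩
  · exact Finset.mem_image.mpr ⟨y, Finset.mem_filter.mpr ⟨hy, h⟩, rfl⟩

end Counting

/-- The number of acute triangles of minimum (nonzero) area spanned by `n`
points in the plane is `O(n)`. -/
theorem acute_min_area_triangles_linear :
    ∃ C : ℝ, 0 < C ∧ ∀ (n : ℕ) (S : Finset Plane), S.card = n →
      ∀ A : ℝ, 0 < A → IsLeast (posAreaSet2 S) A →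
        (acuteAreaTripleCount2 S A : ℝ) ≤ C * n := by
  refine ⟨12, by norm_num, ?_⟩
  rintro n S rfl A - hL
  have hsub : {T : Finset Plane | T ⊆ S ∧ T.card = 3 ∧ ∃ a b c : Plane,
      T = {a, b, c} ∧ triArea2 a b c = A ∧ IsAcuteTriangle a b c} ⊆ anchoredTriangles S A := by
    rintro T ⟨hTS, -, a, b, c, rfl, harea, hacute⟩
    exact mem_anchoredTriangles hTS harea hacute
  have hcount : acuteAreaTripleCount2 S A ≤ 12 * S.card :=
    calc acuteAreaTripleCount2 S A ≤ (anchoredTriangles S A).card :=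
          (Set.ncard_le_ncard hsub (Finset.finite_toSet _)).trans_eq (Set.ncard_coe_finset _)
      _ ≤ 12 * S.card := card_anchoredTriangles_le hL
  exact_mod_cast hcount
end

section
/- There is a constant C > 0 such that for every n and every set S of n points in the plane ℝ² in strictly convex position with n ≥ 3, with A > 0 the minimum area over all nondegenerate triangles spanned by S, the number of unordered triples of distinct points of S forming a triangle of area exactly A is at most C · n. -/
/-!
Every minimum-area triangle of `S` has a side that is an edge of the convex hull of `S`:
otherwise there are points of `S` beyond two of its sides, and minimality of the area forces one
vertex of the triangle into a triangle spanned by other points of `S`. A convex polygon has at most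
`n` counterclockwise edges, and each is a side of at most two minimum-area triangles, because
their third vertices lie on one line parallel to it and no three points of `S` are collinear.
-/

open scoped Classical

open Finset

/-- The determinant of the rows `(1, a)`, `(1, b)`, `(1, c)`: twice the signed area of `abc`,
positive iff `abc` is counterclockwise. -/
def det3 (a b c : Plane) : ℝ :=
  (b 0 - a 0) * (c 1 - a 1) - (b 1 - a 1) * (c 0 - a 0)

theorem triArea2_eq_abs_det3_div_two (a b c : Plane) : triArea2 a b c = |det3 a b c| / 2 := rfl

theorem det3_rotate (a b c : Plane) : det3 b c a = det3 a b c := by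
  simp only [det3]; ring

theorem det3_swap_right (a b c : Plane) : det3 a c b = -det3 a b c := by
  simp only [det3]; ring

theorem det3_swap_left (a b c : Plane) : det3 b a c = -det3 a b c := by
  simp only [det3]; ring

theorem det3_add_det3_add_det3 (p u v w : Plane) :
    det3 p v w + det3 u p w + det3 u v p = det3 u v w := by
  simp only [det3]; ring

theorem ne_of_det3_ne_zero {a b c : Plane} (h : det3 a b c ≠ 0) : a ≠ b ∧ a ≠ c ∧ b ≠ c := by
  refine ⟨?_, ?_, ?_⟩ <;> rintro rfl <;> exact h (by simp only [det3]; ring)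

theorem norm_sub_sq_eq (u v : Plane) : ‖v - u‖ ^ 2 = (v 0 - u 0) ^ 2 + (v 1 - u 1) ^ 2 := by
  simp [EuclideanSpace.norm_sq_eq, Fin.sum_univ_two]

theorem det3_eq_zero_of_det3_eq {u v w₁ w₂ w₃ : Plane} (huv : u ≠ v)
    (h₂ : det3 u v w₂ = det3 u v w₁) (h₃ : det3 u v w₃ = det3 u v w₁) : det3 w₁ w₂ w₃ = 0 := by
  have hN : ‖v - u‖ ^ 2 ≠ 0 := by simp [sub_eq_zero, huv.symm]
  have h : ‖v - u‖ ^ 2 * det3 w₁ w₂ w₃ = 0 := by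
    rw [norm_sub_sq_eq]
    simp only [det3] at h₂ h₃ ⊢
    linear_combination ((v 0 - u 0) * (w₂ 0 - w₁ 0) + (v 1 - u 1) * (w₂ 1 - w₁ 1)) * h₃ -
      ((v 0 - u 0) * (w₃ 0 - w₁ 0) + (v 1 - u 1) * (w₃ 1 - w₁ 1)) * h₂
  exact (mul_eq_zero.1 h).resolve_left hN

theorem mem_affineSpan_pair_of_det3_eq_zero {a b c : Plane} (hab : a ≠ b) (h : det3 a b c = 0) :
    c ∈ line[ℝ, a, b] := by
  have hN : ‖b - a‖ ^ 2 ≠ 0 := by simp [sub_eq_zero, hab.symm]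
  set t := ((c 0 - a 0) * (b 0 - a 0) + (c 1 - a 1) * (b 1 - a 1)) / ‖b - a‖ ^ 2
  convert AffineMap.lineMap_mem_affineSpan_pair t a b
  rw [norm_sub_sq_eq] at hN
  simp only [det3] at h
  ext i
  fin_cases i <;>
    simp only [Fin.zero_eta, Fin.mk_one, AffineMap.lineMap_apply, vsub_eq_sub, vadd_eq_add,
      PiLp.add_apply, PiLp.smul_apply, PiLp.sub_apply, smul_eq_mul, t, norm_sub_sq_eq] <;>
    field_simp
  · linear_combination -(b 1 - a 1) * h
  · linear_combination (b 0 - a 0) * h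

/-- Cramer's rule in barycentric form. -/
theorem mem_convexHull_of_det3_nonneg {p u v w : Plane} (hD : 0 < det3 u v w)
    (hu : 0 ≤ det3 p v w) (hv : 0 ≤ det3 u p w) (hw : 0 ≤ det3 u v p) :
    p ∈ convexHull ℝ {u, v, w} := by
  have hp : p = ∑ i, (![det3 p v w, det3 u p w, det3 u v p] i / det3 u v w) • ![u, v, w] i := by
    ext j
    fin_cases j <;>
      simp only [Fin.zero_eta, Fin.mk_one, Fin.sum_univ_three, Matrix.cons_val_zero,
        Matrix.cons_val_one, Matrix.cons_val, PiLp.add_apply, PiLp.smul_apply, smul_eq_mul] <;>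
      field_simp <;> simp only [det3] <;> ring
  rw [hp]
  refine (convex_convexHull ℝ _).sum_mem (fun i _ => ?_) ?_ (fun i _ => subset_convexHull ℝ _ ?_)
  · fin_cases i <;> exact div_nonneg ‹_› hD.le
  · simp only [Fin.sum_univ_three, Matrix.cons_val_zero, Matrix.cons_val_one, Matrix.cons_val_two,
      Matrix.head_cons, Matrix.tail_cons]
    rw [← add_div, ← add_div, det3_add_det3_add_det3, div_self hD.ne']
  · fin_cases i <;> simp

theorem pos_of_mem_posAreaSet2 {S : Finset Plane} {x : ℝ} (hx : x ∈ posAreaSet2 S) : 0 < x := by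
  obtain ⟨a, -, b, -, c, -, h, rfl⟩ := hx
  exact h

theorem two_mul_le_det3 {S : Finset Plane} {A : ℝ} (hmin : IsLeast (posAreaSet2 S) A)
    {a b c : Plane} (ha : a ∈ S) (hb : b ∈ S) (hc : c ∈ S) (h : 0 < det3 a b c) :
    2 * A ≤ det3 a b c := by
  have hpos : 0 < triArea2 a b c := by rw [triArea2_eq_abs_det3_div_two]; positivity
  have := hmin.2 ⟨a, ha, b, hb, c, hc, hpos, rfl⟩
  rw [triArea2_eq_abs_det3_div_two, abs_of_pos h] at this
  linarith

/-- For distinct `a b ∈ S`, this says that `(a, b)` is a counterclockwise edge of the convex hull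
of `S`. -/
def IsHullEdge (S : Finset Plane) (a b : Plane) : Prop :=
  ∀ p ∈ S, 0 ≤ det3 a b p

noncomputable def hullEdges (S : Finset Plane) : Finset (Plane × Plane) :=
  {e ∈ S ×ˢ S | e.1 ≠ e.2 ∧ IsHullEdge S e.1 e.2}

namespace StrictlyConvexPosition

variable {S : Finset Plane}

theorem notMem_convexHull (hS : StrictlyConvexPosition S) {p : Plane} {T : Set Plane}
    (hp : p ∈ S) (hT : T ⊆ S) (hpT : p ∉ T) : p ∉ convexHull ℝ T := by
  have hconv := ((convex_convexHull ℝ _).mem_extremePoints_iff_convex_sdiff.1 (hS p hp)).2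
  have hsub : convexHull ℝ T ⊆ convexHull ℝ (S : Set Plane) \ {p} :=
    convexHull_min (fun x hx => ⟨subset_convexHull ℝ _ (hT hx), by rintro rfl; exact hpT hx⟩) hconv
  exact fun h => (hsub h).2 rfl

theorem not_wbtw (hS : StrictlyConvexPosition S) {x y z : Plane} (hx : x ∈ S) (hy : y ∈ S)
    (hz : z ∈ S) (hyx : y ≠ x) (hyz : y ≠ z) : ¬Wbtw ℝ x y z := fun h =>
  hS.notMem_convexHull hy (T := {x, z}) (by simp [Set.insert_subset_iff, hx, hz])
    (by simp [hyx, hyz])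
    (by rw [convexHull_pair]; exact h.mem_segment)

theorem det3_ne_zero (hS : StrictlyConvexPosition S) {a b c : Plane} (ha : a ∈ S) (hb : b ∈ S)
    (hc : c ∈ S) (hab : a ≠ b) (hac : a ≠ c) (hbc : b ≠ c) : det3 a b c ≠ 0 := fun h => by
  have hcol : Collinear ℝ {c, a, b} :=
    collinear_insert_of_mem_affineSpan_pair (mem_affineSpan_pair_of_det3_eq_zero hab h)
  rcases hcol.wbtw_or_wbtw_or_wbtw with h | h | h
  · exact hS.not_wbtw hc ha hb hac hab h
  · exact hS.not_wbtw ha hb hc hab.symm hbc h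
  · exact hS.not_wbtw hb hc ha hbc.symm hac.symm h

theorem det3_neg_or_det3_neg_or_det3_neg (hS : StrictlyConvexPosition S) {p u v w : Plane}
    (hp : p ∈ S) (hu : u ∈ S) (hv : v ∈ S) (hw : w ∈ S) (hpu : p ≠ u) (hpv : p ≠ v) (hpw : p ≠ w)
    (hD : 0 < det3 u v w) : det3 p v w < 0 ∨ det3 u p w < 0 ∨ det3 u v p < 0 := by
  by_contra! h
  exact hS.notMem_convexHull hp (by simp [Set.insert_subset_iff, hu, hv, hw])
    (by simp [hpu, hpv, hpw]) (mem_convexHull_of_det3_nonneg hD h.1 h.2.1 h.2.2)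

theorem det3_pos_or_det3_pos (hS : StrictlyConvexPosition S) {a b c p : Plane}
    (ha : a ∈ S) (hb : b ∈ S) (hc : c ∈ S) (hp : p ∈ S) (hpa : p ≠ a) (hD : 0 < det3 a b c) :
    0 < det3 a p c ∨ 0 < det3 a b p := by
  obtain ⟨hab, hac, -⟩ := ne_of_det3_ne_zero hD.ne'
  by_contra! h
  have hpbc : 0 < det3 p b c := by linarith [det3_add_det3_add_det3 p a b c]
  rcases hS.det3_neg_or_det3_neg_or_det3_neg ha hp hb hc hpa.symm hab hac hpbc with h' | h' | h'
  · linarith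
  · linarith [det3_swap_left a p c]
  · linarith [det3_rotate a p b, det3_swap_right a b p]

theorem card_filter_det3_eq_le_two (hS : StrictlyConvexPosition S) {u v : Plane} (huv : u ≠ v)
    (r : ℝ) : #{w ∈ S | det3 u v w = r} ≤ 2 := by
  by_contra! h
  obtain ⟨w₁, hw₁, w₂, hw₂, w₃, hw₃, h₁₂, h₁₃, h₂₃⟩ := two_lt_card.1 h
  simp only [mem_filter] at hw₁ hw₂ hw₃
  exact hS.det3_ne_zero hw₁.1 hw₂.1 hw₃.1 h₁₂ h₁₃ h₂₃
    (det3_eq_zero_of_det3_eq huv (hw₂.2.trans hw₁.2.symm) (hw₃.2.trans hw₁.2.symm))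

theorem eq_of_isHullEdge (hS : StrictlyConvexPosition S) {u v v' : Plane} (hu : u ∈ S) (hv : v ∈ S)
    (hv' : v' ∈ S) (huv : u ≠ v) (huv' : u ≠ v') (h : IsHullEdge S u v) (h' : IsHullEdge S u v') :
    v = v' := by
  by_contra hvv'
  have := h v' hv'
  have := h' v hv
  exact hS.det3_ne_zero hu hv hv' huv huv' hvv' (by linarith [det3_swap_right u v v'])

theorem card_hullEdges_le (hS : StrictlyConvexPosition S) : #(hullEdges S) ≤ #S := by
  refine card_le_card_of_injOn Prod.fst (fun e he => (mem_product.1 (mem_filter.1 he).1).1) ?_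
  rintro ⟨u, v⟩ he ⟨u', v'⟩ he' (rfl : u = u')
  simp only [hullEdges, coe_filter, mem_product, Set.mem_ofPred_eq] at he he'
  rw [hS.eq_of_isHullEdge he.1.1 he.1.2 he'.1.2 he.2.1 he'.2.1 he.2.2 he'.2.2]

theorem isHullEdge_or_isHullEdge (hS : StrictlyConvexPosition S) {A : ℝ}
    (hmin : IsLeast (posAreaSet2 S) A) {a b c : Plane} (ha : a ∈ S) (hb : b ∈ S) (hc : c ∈ S)
    (hD : det3 a b c = 2 * A) : IsHullEdge S a b ∨ IsHullEdge S b c := by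
  have hDpos : 0 < det3 a b c := by linarith [pos_of_mem_posAreaSet2 hmin.1]
  obtain ⟨hab, hac, hbc⟩ := ne_of_det3_ne_zero hDpos.ne'
  by_contra! h
  simp only [IsHullEdge, not_forall, not_le, exists_prop] at h
  obtain ⟨⟨d, hd, hγd⟩, e, he, hαe⟩ := h
  obtain ⟨-, had, hbd⟩ := ne_of_det3_ne_zero hγd.ne
  obtain ⟨-, hbe, hce⟩ := ne_of_det3_ne_zero hαe.ne
  -- Write `α p, β p, γ p` for `det3 p b c, det3 a p c, det3 a b p`, the barycentric coordinates of
  -- `p` scaled by `D = det3 a b c = 2A`. Each of the next three bounds holds since otherwise `a`,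
  -- `c`, resp. `b` would lie in a triangle spanned by other points of `S`.
  have hβd : 2 * A ≤ det3 a d c := two_mul_le_det3 hmin ha hd hc <|
    (hS.det3_pos_or_det3_pos ha hb hc hd had.symm hDpos).resolve_right hγd.not_gt
  have hβe : 2 * A ≤ det3 a e c := by
    refine two_mul_le_det3 hmin ha he hc ?_
    rcases hS.det3_pos_or_det3_pos hc ha hb he hce.symm (by rwa [← det3_rotate]) with h | h
    · linarith [det3_rotate c e b, det3_rotate e b c]
    · rwa [det3_rotate]
  have hγe : 0 < det3 a b e := by
    rcases hS.det3_pos_or_det3_pos hb hc ha he hbe.symm (by rwa [det3_rotate]) with h | h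
    · rwa [det3_rotate] at h
    · linarith
  -- In the coordinates `(β, γ)`, `a = (0, 0)` and `b = (D, 0)`, while `d ∈ [D, ∞) × (-∞, 0)` and
  -- `e ∈ [D, ∞) × (0, ∞)`: so `b` lies in the triangle `ade`.
  have hade : det3 a b c * det3 a d e = det3 a d c * det3 a b e - det3 a e c * det3 a b d := by
    simp only [det3]; ring
  have hbde : det3 a b c * det3 b d e =
      (det3 a d c - det3 a b c) * det3 a b e - (det3 a e c - det3 a b c) * det3 a b d := by
    simp only [det3]; ring
  have hade_pos : 0 < det3 a d e := by
    refine pos_of_mul_pos_right (a := det3 a b c) ?_ hDpos.le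
    rw [hade]; nlinarith
  rcases hS.det3_neg_or_det3_neg_or_det3_neg hb ha hd he hab.symm hbd hbe hade_pos with h | h | h
  · nlinarith
  · linarith
  · linarith [det3_swap_right a b d]

theorem exists_mem_hullEdges_of_det3_eq (hS : StrictlyConvexPosition S) {A : ℝ}
    (hmin : IsLeast (posAreaSet2 S) A) {a b c : Plane} (ha : a ∈ S) (hb : b ∈ S) (hc : c ∈ S)
    (hD : det3 a b c = 2 * A) :
    ∃ e ∈ hullEdges S, ∃ w ∈ S,
      det3 e.1 e.2 w = 2 * A ∧ {e.1, e.2, w} = ({a, b, c} : Finset Plane) := by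
  have hDpos : 0 < det3 a b c := by linarith [pos_of_mem_posAreaSet2 hmin.1]
  obtain ⟨hab, -, hbc⟩ := ne_of_det3_ne_zero hDpos.ne'
  rcases hS.isHullEdge_or_isHullEdge hmin ha hb hc hD with h | h
  · exact ⟨(a, b), mem_filter.2 ⟨mem_product.2 ⟨ha, hb⟩, hab, h⟩, c, hc, hD, rfl⟩
  · refine ⟨(b, c), mem_filter.2 ⟨mem_product.2 ⟨hb, hc⟩, hbc, h⟩, a, ha, by rwa [det3_rotate], ?_⟩
    ext; simp only [mem_insert, mem_singleton]; tauto

theorem exists_mem_hullEdges (hS : StrictlyConvexPosition S) {A : ℝ}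
    (hmin : IsLeast (posAreaSet2 S) A) {a b c : Plane} (ha : a ∈ S) (hb : b ∈ S) (hc : c ∈ S)
    (hA : triArea2 a b c = A) :
    ∃ e ∈ hullEdges S, ∃ w ∈ S,
      det3 e.1 e.2 w = 2 * A ∧ {e.1, e.2, w} = ({a, b, c} : Finset Plane) := by
  rw [triArea2_eq_abs_det3_div_two] at hA
  rcases abs_choice (det3 a b c) with h | h
  · exact hS.exists_mem_hullEdges_of_det3_eq hmin ha hb hc (by linarith)
  · rw [← det3_swap_right] at h
    rw [pair_comm]
    exact hS.exists_mem_hullEdges_of_det3_eq hmin ha hc hb (by linarith)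

theorem areaTripleCount2_le (hS : StrictlyConvexPosition S) {A : ℝ}
    (hmin : IsLeast (posAreaSet2 S) A) : areaTripleCount2 S A ≤ 2 * #S := by
  calc areaTripleCount2 S A
      ≤ #((hullEdges S).biUnion fun e => {w ∈ S | det3 e.1 e.2 w = 2 * A}.image
          fun w => ({e.1, e.2, w} : Finset Plane)) := by
        rw [areaTripleCount2, ← Set.ncard_coe_finset]
        refine Set.ncard_le_ncard ?_
        rintro T ⟨hTS, -, a, b, c, rfl, hA⟩
        have habc : a ∈ S ∧ b ∈ S ∧ c ∈ S := by simpa [insert_subset_iff] using hTS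
        obtain ⟨e, he, w, hw, hD, hT⟩ :=
          hS.exists_mem_hullEdges hmin habc.1 habc.2.1 habc.2.2 hA
        exact mem_biUnion.2 ⟨e, he, mem_image.2 ⟨w, mem_filter.2 ⟨hw, hD⟩, hT⟩⟩
    _ ≤ #(hullEdges S) * 2 := card_biUnion_le_card_mul _ _ _ fun e he =>
        card_image_le.trans (hS.card_filter_det3_eq_le_two (mem_filter.1 he).2.1 _)
    _ ≤ 2 * #S := by rw [mul_comm]; exact Nat.mul_le_mul_left 2 hS.card_hullEdges_le

end StrictlyConvexPosition

/-- `n ≥ 3` points in strictly convex position in the plane span at most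
`O(n)` triangles of minimum (nonzero) area. -/
theorem convex_position_min_area_linear :
    ∃ C : ℝ, 0 < C ∧ ∀ (n : ℕ) (S : Finset Plane), 3 ≤ n → S.card = n →
      StrictlyConvexPosition S →
      ∀ A : ℝ, 0 < A → IsLeast (posAreaSet2 S) A →
        (areaTripleCount2 S A : ℝ) ≤ C * n := by
  refine ⟨2, two_pos, fun n S _ hn hS A _ hmin => ?_⟩
  exact_mod_cast hn ▸ hS.areaTripleCount2_le hmin
end
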